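/- arXiv:2211.10083 — 11 statements merged into one kernel-verified Lean document; each statement's English description precedes it below -/
import Mathlib

section
/- Let A, S, S̄ be finite sets with |S| = |S̄|, and let f : A → A, h : S → S̄, λ : A → S, λ̄ : A → S̄ be maps with λ̄ ∘ f = h ∘ λ. If λ and λ̄ are both surjective, then f is a bijection if and only if h is a bijection and f is injective on λ⁻¹(s) for each s ∈ S. -/
/-- AGW criterion. -/
theorem agw_criterion (A S S' : Type) [Finite A] [Finite S] [Finite S']
    (hcard : Nat.card S = Nat.card S')
    (f : A → A) (h : S → S') (lam : A → S) (lam' : A → S')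
    (hcomm : lam' ∘ f = h ∘ lam)
    (hlam : Function.Surjective lam) (hlam' : Function.Surjective lam') :
    Function.Bijective f ↔
      (Function.Bijective h ∧ ∀ s : S, Set.InjOn f (lam ⁻¹' {s})) := by
  constructor
  · intro hf
    refine ⟨?_, fun s => hf.injective.injOn⟩
    rw [Nat.bijective_iff_surjective_and_card]
    refine ⟨?_, hcard⟩
    intro s'
    obtain ⟨a, ha⟩ := hlam' s'
    obtain ⟨b, hb⟩ := hf.surjective a
    exact ⟨lam b, by have := congrFun hcomm b; simp [hb] at this; rw [← this, ha]⟩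
  · rintro ⟨hh, hinj⟩
    rw [Finite.injective_iff_bijective.symm]
    intro a b hab
    have h1 : h (lam a) = h (lam b) := by
      have ha := congrFun hcomm a
      have hb := congrFun hcomm b
      simp only [Function.comp_apply] at ha hb
      rw [← ha, ← hb, hab]
    have h2 : lam a = lam b := hh.injective h1
    exact hinj (lam a) rfl h2.symm hab
end

section
/- Let A, S, S̄ be finite sets with |S| = |S̄|, f : A → A, h : S → S̄, λ : A → S, λ̄ : A → S̄ maps with λ̄ ∘ f = h ∘ λ. If λ̄ is surjective and h is bijective, then f is a bijection if and only if λ is surjective and f is injective on λ⁻¹(s) for each s ∈ S. -/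
/-- Variant of the AGW criterion where bijectivity of `h` is assumed. -/
theorem agw_variant (A S S' : Type) [Finite A] [Finite S] [Finite S']
    (hcard : Nat.card S = Nat.card S')
    (f : A → A) (h : S → S') (lam : A → S) (lam' : A → S')
    (hcomm : lam' ∘ f = h ∘ lam)
    (hlam' : Function.Surjective lam') (hh : Function.Bijective h) :
    Function.Bijective f ↔
      (Function.Surjective lam ∧ ∀ s : S, Set.InjOn f (lam ⁻¹' {s})) := by
  constructor
  · rintro ⟨hfi, hfs⟩
    refine ⟨?_, fun s a _ b _ hab => hfi hab⟩
    intro s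
    obtain ⟨a, ha⟩ := hlam' (h s)
    obtain ⟨b, rfl⟩ := hfs a
    refine ⟨b, hh.1 ?_⟩
    have := congrFun hcomm b
    simp only [Function.comp_apply] at this
    rw [← this, ha]
  · rintro ⟨hlam, hinj⟩
    have hfi : Function.Injective f := by
      intro a b hab
      have h1 := congrFun hcomm a
      have h2 := congrFun hcomm b
      simp only [Function.comp_apply] at h1 h2
      have hlab : lam a = lam b := hh.1 (by rw [← h1, ← h2, hab])
      exact hinj (lam a) rfl hlab.symm hab
    exact Finite.injective_iff_bijective.mp hfi
end

section
/- Let q be a prime power, ℓ a positive divisor of q−1, s = (q−1)/ℓ, and f(x) = x^r h(x^s) ∈ F_q[x]. Then f permutes F_q if and only if gcd(r, s) = 1 and g(x) = x^r h(x)^s permutes the set μ_ℓ of ℓ-th roots of unity in F_q. -/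
/-!
The `s`-th power map sends `F_q^*` onto `μ_ℓ` and intertwines the two maps: `f(y)^s = g(y^s)`.
Hence a permutation `f` of `F_q`, which fixes `0`, induces a surjection, so a permutation, `g`
of `μ_ℓ`; and a common root `ζ ≠ 1` of `x^r` and `x^s`, which exists as soon as
`gcd(r, s) > 1`, would give `f(ζ) = f(1)`. Conversely, if `g` permutes `μ_ℓ` then `h` has no
zero on `μ_ℓ`, and `f(x) = f(y)` forces first `x^s = y^s`, then `x^r = y^r`, so `x = y` by
coprimality.
-/

open Polynomial Function

theorem IsCyclic.range_powMonoidHom_eq_ker {G : Type*} [CommGroup G] [IsCyclic G] [Finite G]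
    {s ℓ : ℕ} (hcard : s * ℓ = Nat.card G) :
    (powMonoidHom s : G →* G).range = (powMonoidHom ℓ : G →* G).ker := by
  have hs : s ≠ 0 := left_ne_zero_of_mul (hcard ▸ Nat.card_pos.ne')
  refine Subgroup.eq_of_le_of_card_ge ?_ ?_
  · rintro _ ⟨y, rfl⟩
    simp [← pow_mul, hcard, pow_card_eq_one']
  · rw [IsCyclic.card_powMonoidHom_ker, IsCyclic.card_powMonoidHom_range, ← hcard,
      Nat.gcd_mul_left_left, Nat.gcd_mul_right_left,
      Nat.mul_div_cancel_left _ (Nat.pos_of_ne_zero hs)]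

theorem IsCyclic.exists_pow_eq_iff_pow_eq_one {G : Type*} [CommGroup G] [IsCyclic G] [Finite G]
    {s ℓ : ℕ} (hcard : s * ℓ = Nat.card G) {x : G} : (∃ y, y ^ s = x) ↔ x ^ ℓ = 1 := by
  simpa using SetLike.ext_iff.mp (range_powMonoidHom_eq_ker hcard) x

theorem exists_ne_one_pow_eq_one_of_not_coprime {G : Type*} [Group G] [Finite G] {r s : ℕ}
    (hs : s ∣ Nat.card G) (hrs : ¬ r.Coprime s) :
    ∃ ζ : G, ζ ≠ 1 ∧ ζ ^ r = 1 ∧ ζ ^ s = 1 := by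
  have hp : (r.gcd s).minFac.Prime := Nat.minFac_prime hrs
  have := Fact.mk hp
  obtain ⟨ζ, hζ⟩ := exists_prime_orderOf_dvd_card' _
    ((Nat.minFac_dvd _).trans ((Nat.gcd_dvd_right r s).trans hs))
  refine ⟨ζ, fun h1 => hp.ne_one (by rw [← hζ, h1, orderOf_one]), ?_⟩
  rw [← pow_gcd_eq_one, ← orderOf_dvd_iff_pow_eq_one, hζ]
  exact Nat.minFac_dvd _

theorem eq_of_pow_eq_of_pow_eq_of_coprime {G₀ : Type*} [CommGroupWithZero G₀] {x y : G₀}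
    {m n : ℕ}
    (hmn : m.Coprime n) (hy : y ≠ 0) (hm : x ^ m = y ^ m) (hn : x ^ n = y ^ n) : x = y := by
  have hxy : (x / y) ^ m = 1 ∧ (x / y) ^ n = 1 := by
    simp only [div_pow, hm, hn, div_self (pow_ne_zero _ hy), and_self]
  rwa [pow_eq_one_iff_of_coprime hmn, div_eq_one_iff_eq hy] at hxy

theorem FiniteField.image_pow_compl_zero {K : Type*} [Field K] [Fintype K] {s ℓ : ℕ}
    (hsℓ : s * ℓ = Fintype.card K - 1) :
    (· ^ s) '' ({0}ᶜ : Set K) = {u : K | u ^ ℓ = 1} := by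
  ext u
  constructor
  · rintro ⟨x, hx, rfl⟩
    rw [Set.mem_ofPred_eq, ← pow_mul, hsℓ]
    exact FiniteField.pow_card_sub_one_eq_one x hx
  · intro hu
    have hℓ : ℓ ≠ 0 :=
      right_ne_zero_of_mul (hsℓ ▸ Nat.sub_ne_zero_of_lt Fintype.one_lt_card)
    have hu0 : u ≠ 0 := by
      rintro rfl
      exact zero_ne_one ((zero_pow hℓ).symm.trans hu)
    have hcard : s * ℓ = Nat.card Kˣ := by rw [Nat.card_units, Nat.card_eq_fintype_card, hsℓ]
    obtain ⟨y, hy⟩ := (IsCyclic.exists_pow_eq_iff_pow_eq_one hcard (x := Units.mk0 u hu0)).mpr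
      (Units.ext (by simpa using hu))
    exact ⟨y, y.ne_zero, by simpa using congrArg Units.val hy⟩

theorem semiconj_pow_xr_hxs {R : Type*} [CommSemiring R] {r s : ℕ} {h : R[X]} {f g : R → R}
    (hf : ∀ x, f x = x ^ r * h.eval (x ^ s))
    (hg : ∀ x, g x = x ^ r * h.eval x ^ s) : Semiconj (· ^ s) f g :=
  fun y => by simp only [hf, hg]; ring

section

variable {K : Type*} [Field K] [Fintype K] {r s ℓ : ℕ} {h : K[X]} {f g : K → K}

theorem coprime_of_injective_xr_hxs (hf : ∀ x, f x = x ^ r * h.eval (x ^ s))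
    (hs : s ∣ Fintype.card K - 1) (hinj : Injective f) : r.Coprime s := by
  by_contra hrs
  obtain ⟨ζ, hζ1, hζr, hζs⟩ := exists_ne_one_pow_eq_one_of_not_coprime (G := Kˣ)
    (by rwa [Nat.card_units, Nat.card_eq_fintype_card]) hrs
  have hfζ : f ζ = f 1 := by
    rw [hf, hf, ← Units.val_pow_eq_pow_val, ← Units.val_pow_eq_pow_val, hζr, hζs]
    simp
  exact hζ1 (Units.ext (hinj hfζ))

theorem bijOn_roots_of_bijective_xr_hxs (hf : ∀ x, f x = x ^ r * h.eval (x ^ s))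
    (hg : ∀ x, g x = x ^ r * h.eval x ^ s) (hr : r ≠ 0) (hsℓ : s * ℓ = Fintype.card K - 1)
    (hbij : Bijective f) : Set.BijOn g {u : K | u ^ ℓ = 1} {u : K | u ^ ℓ = 1} := by
  have hf0 : f 0 = 0 := by rw [hf, zero_pow hr, zero_mul]
  have hfU : f '' {0}ᶜ = {0}ᶜ := by rw [Set.image_compl_eq hbij, Set.image_singleton, hf0]
  have hgμ : g '' {u : K | u ^ ℓ = 1} = {u : K | u ^ ℓ = 1} := by
    rw [← FiniteField.image_pow_compl_zero hsℓ, ← (semiconj_pow_xr_hxs hf hg).set_image, hfU]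
  obtain ⟨hsurj, hmaps⟩ := Set.image_eq_iff_surjOn_mapsTo.mp hgμ
  exact (Set.toFinite _).surjOn_iff_bijOn_of_mapsTo hmaps |>.mp hsurj

theorem injective_of_bijOn_roots_xr_hxs (hf : ∀ x, f x = x ^ r * h.eval (x ^ s))
    (hg : ∀ x, g x = x ^ r * h.eval x ^ s) (hr : r ≠ 0) (hsℓ : s * ℓ = Fintype.card K - 1)
    (hrs : r.Coprime s) (hbij : Set.BijOn g {u : K | u ^ ℓ = 1} {u : K | u ^ ℓ = 1}) :
    Injective f := by
  obtain ⟨hs, hℓ⟩ : s ≠ 0 ∧ ℓ ≠ 0 :=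
    Nat.mul_ne_zero_iff.mp (hsℓ ▸ Nat.sub_ne_zero_of_lt Fintype.one_lt_card)
  have hμ := FiniteField.image_pow_compl_zero (K := K) hsℓ
  have hpow : ∀ x : K, x ≠ 0 → x ^ s ∈ {u : K | u ^ ℓ = 1} :=
    fun x hx => hμ ▸ ⟨x, hx, rfl⟩
  have hh : ∀ x : K, x ≠ 0 → h.eval (x ^ s) ≠ 0 := by
    intro x hx h0
    have := hbij.mapsTo (hpow x hx)
    simp only [Set.mem_ofPred_eq, hg, h0, zero_pow hs, mul_zero, zero_pow hℓ] at this
    exact zero_ne_one this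
  have hf0 : ∀ x, f x = 0 ↔ x = 0 := fun x => by
    by_cases hx : x = 0 <;> simp [hf, hx, hr, hh]
  intro x y hxy
  obtain rfl | hy := eq_or_ne y 0
  · rw [← hf0, hxy, hf0]
  have hx : x ≠ 0 := by rwa [Ne, ← hf0, hxy, hf0]
  have hs_eq : x ^ s = y ^ s := hbij.injOn (hpow x hx) (hpow y hy) <| by
    rw [← semiconj_pow_xr_hxs hf hg x, ← semiconj_pow_xr_hxs hf hg y, hxy]
  have hr_eq : x ^ r = y ^ r := by
    rw [hf, hf, hs_eq] at hxy
    exact mul_right_cancel₀ (hh y hy) hxy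
  exact eq_of_pow_eq_of_pow_eq_of_coprime hrs hy hr_eq hs_eq

end

theorem xr_hxs_permutes_iff_general (K : Type) [Field K] [Fintype K]
    (ℓ r : ℕ) (hr : 0 < r) (hdvd : ℓ ∣ Fintype.card K - 1)
    (s : ℕ) (hs : s = (Fintype.card K - 1) / ℓ)
    (h : Polynomial K)
    (f g : K → K)
    (hf : ∀ x : K, f x = x ^ r * h.eval (x ^ s))
    (hg : ∀ x : K, g x = x ^ r * (h.eval x) ^ s) :
    Function.Bijective f ↔
      (Nat.gcd r s = 1 ∧ Set.BijOn g {x : K | x ^ ℓ = 1} {x : K | x ^ ℓ = 1}) := by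
  have hsℓ : s * ℓ = Fintype.card K - 1 := hs ▸ Nat.div_mul_cancel hdvd
  constructor
  · intro hbij
    exact ⟨coprime_of_injective_xr_hxs hf (Dvd.intro ℓ hsℓ) hbij.1,
      bijOn_roots_of_bijective_xr_hxs hf hg hr.ne' hsℓ hbij⟩
  · rintro ⟨hrs, hbij⟩
    exact Finite.injective_iff_bijective.mp
      (injective_of_bijOn_roots_xr_hxs hf hg hr.ne' hsℓ hrs hbij)

/-- Lemma 3.1: `f(x) = x^r h(x^s)` permutes `F_q` iff `gcd(r,s) = 1` and
`g(x) = x^r h(x)^s` permutes the group `μ_ℓ` of `ℓ`-th roots of unity, where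
`s = (q-1)/ℓ`. -/
theorem xr_hxs_permutes_iff (K : Type) [Field K] [Fintype K]
    (ℓ r : ℕ) (hℓ : 0 < ℓ) (hr : 0 < r) (hdvd : ℓ ∣ Fintype.card K - 1)
    (s : ℕ) (hs : s = (Fintype.card K - 1) / ℓ)
    (h : Polynomial K)
    (f g : K → K)
    (hf : ∀ x : K, f x = x ^ r * h.eval (x ^ s))
    (hg : ∀ x : K, g x = x ^ r * (h.eval x) ^ s) :
    Function.Bijective f ↔
      (Nat.gcd r s = 1 ∧ Set.BijOn g {x : K | x ^ ℓ = 1} {x : K | x ^ ℓ = 1}) :=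
  xr_hxs_permutes_iff_general K ℓ r hr hdvd s hs h f g hf hg
end

section
/- Let q be a prime power, ℓ | q−1, s = (q−1)/ℓ, and suppose f(x) = x^r h(x^s) permutes F_q, where g(x) = x^r h(x)^s permutes μ_ℓ with inverse g⁻¹ on μ_ℓ. If a, b are integers with a·s + b·r = 1, then the compositional inverse of f on F_q is given by f⁻¹(x) = g⁻¹(x^s)^a · x^b · h(g⁻¹(x^s))^{−b} for x ≠ 0, and f⁻¹(0) = 0. -/
/-! Since `f(x)^s = x^(rs) h(x^s)^s = g(x^s)` and `x^s ∈ μ_ℓ`, applying `g⁻¹` to `f(x)^s` recovers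
`x^s`, and then `h(x^s)`; dividing it out of `f(x)` gives `x^r`. From `x^s` and `x^r` the
Bézout relation `a s + b r = 1` recovers `x = (x^s)^a (x^r)^b`. -/

open scoped Classical

theorem pow_div_pow_eq_one_of_dvd_card_sub_one {K : Type*} [Field K] [Fintype K] {ℓ : ℕ}
    (hdvd : ℓ ∣ Fintype.card K - 1) {x : K} (hx : x ≠ 0) :
    (x ^ ((Fintype.card K - 1) / ℓ)) ^ ℓ = 1 := by
  rw [← pow_mul, Nat.div_mul_cancel hdvd, FiniteField.pow_card_sub_one_eq_one x hx]

theorem zpow_pow_mul_pow_mul_zpow_neg_eq_self {G₀ : Type*} [CommGroupWithZero G₀] {x c : G₀}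
    (hx : x ≠ 0) (hc : c ≠ 0) {r s : ℕ} {a b : ℤ} (hab : a * s + b * r = 1) :
    (x ^ s) ^ a * (x ^ r * c) ^ b * c ^ (-b) = x := by
  rw [mul_zpow, zpow_neg, ← zpow_natCast x s, ← zpow_natCast x r, ← zpow_mul, ← zpow_mul]
  field_simp
  rw [← zpow_add₀ hx, mul_comm (s : ℤ) a, mul_comm (r : ℤ) b, hab, zpow_one]

theorem inverse_of_xr_hxs_general (K : Type) [Field K] [Fintype K]
    (ℓ r : ℕ) (hr : 0 < r) (hdvd : ℓ ∣ Fintype.card K - 1)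
    (s : ℕ) (hs : s = (Fintype.card K - 1) / ℓ)
    (h : Polynomial K)
    (f g : K → K)
    (hf : ∀ x : K, f x = x ^ r * h.eval (x ^ s))
    (hg : ∀ x : K, g x = x ^ r * (h.eval x) ^ s)
    (hfbij : Function.Bijective f)
    (ginv : K → K)
    (hginv₁ : ∀ x ∈ ({x : K | x ^ ℓ = 1} : Set K), ginv (g x) = x)
    (a b : ℤ) (hab : a * (s : ℤ) + b * (r : ℤ) = 1)
    (finv : K → K)
    (hfinv : ∀ x : K, finv x =
      if x = 0 then 0
      else ginv (x ^ s) ^ a * x ^ b * (h.eval (ginv (x ^ s))) ^ (-b)) :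
    Function.LeftInverse finv f ∧ Function.RightInverse finv f := by
  have hf0 : f 0 = 0 := by simp [hf, zero_pow hr.ne']
  have hleft : Function.LeftInverse finv f := by
    intro x
    rcases eq_or_ne x 0 with rfl | hx
    · simp [hfinv, hf0]
    have hfx : f x ≠ 0 := hf0 ▸ hfbij.injective.ne hx
    have hhx : h.eval (x ^ s) ≠ 0 := right_ne_zero_of_mul (hf x ▸ hfx)
    have hfx_pow : f x ^ s = g (x ^ s) := by
      rw [hf, hg, mul_pow, ← pow_mul, mul_comm r s, pow_mul]
    have hxs : x ^ s ∈ {y : K | y ^ ℓ = 1} :=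
      hs ▸ pow_div_pow_eq_one_of_dvd_card_sub_one hdvd hx
    rw [hfinv, if_neg hfx, hfx_pow, hginv₁ _ hxs, hf]
    exact zpow_pow_mul_pow_mul_zpow_neg_eq_self hx hhx hab
  exact ⟨hleft, hleft.rightInverse_of_surjective hfbij.2⟩

/-- Proposition 3.1: if `f(x) = x^r h(x^s)` permutes `F_q`, `g(x) = x^r h(x)^s`
permutes `μ_ℓ` with inverse `ginv`, and `a·s + b·r = 1`, then the compositional
inverse of `f` is `x ↦ g⁻¹(x^s)^a · x^b · h(g⁻¹(x^s))^{-b}` on `F_q^*`, and `0 ↦ 0`. -/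
theorem inverse_of_xr_hxs (K : Type) [Field K] [Fintype K]
    (ℓ r : ℕ) (hℓ : 0 < ℓ) (hr : 0 < r) (hdvd : ℓ ∣ Fintype.card K - 1)
    (s : ℕ) (hs : s = (Fintype.card K - 1) / ℓ)
    (h : Polynomial K)
    (f g : K → K)
    (hf : ∀ x : K, f x = x ^ r * h.eval (x ^ s))
    (hg : ∀ x : K, g x = x ^ r * (h.eval x) ^ s)
    (hfbij : Function.Bijective f)
    (hgbij : Set.BijOn g {x : K | x ^ ℓ = 1} {x : K | x ^ ℓ = 1})
    (ginv : K → K)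
    (hginv_maps : Set.MapsTo ginv {x : K | x ^ ℓ = 1} {x : K | x ^ ℓ = 1})
    (hginv₁ : ∀ x ∈ ({x : K | x ^ ℓ = 1} : Set K), ginv (g x) = x)
    (hginv₂ : ∀ x ∈ ({x : K | x ^ ℓ = 1} : Set K), g (ginv x) = x)
    (a b : ℤ) (hab : a * (s : ℤ) + b * (r : ℤ) = 1)
    (finv : K → K)
    (hfinv : ∀ x : K, finv x =
      if x = 0 then 0
      else ginv (x ^ s) ^ a * x ^ b * (h.eval (ginv (x ^ s))) ^ (-b)) :
    Function.LeftInverse finv f ∧ Function.RightInverse finv f :=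
  inverse_of_xr_hxs_general K ℓ r hr hdvd s hs h f g hf hg hfbij ginv hginv₁ a b hab finv hfinv
end

section
/- Let q be a prime power, S, S̄ ⊆ F_q^* with |S| = |S̄|, and maps g : S → S̄, λ : F_q^* → S, λ̄ : F_q^* → S̄ with λ̄ ∘ f = g ∘ λ, where f(x) = f₁(x)·h(λ(x)) for a permutation polynomial f₁ of F_q^* and h taking nonzero values on S. If f and g are bijections with inverses f⁻¹ and g⁻¹, then f⁻¹(x) = f₁⁻¹( x / h(g⁻¹(λ̄(x))) ) for all x ∈ F_q^*. -/
/-- Proposition 3.2: if `f(x) = f₁(x)·h(λ(x))` and `f` is a permutation of `F_q^*`,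
with commuting diagram `λ̄ ∘ f = g ∘ λ`, then
`f⁻¹(x) = f₁⁻¹( x / h(g⁻¹(λ̄(x))) )` on `F_q^*`. -/
theorem inverse_of_agw_pp (K : Type) [Field K] [Fintype K]
    (S S' : Set K) (hS0 : (0 : K) ∉ S) (hS'0 : (0 : K) ∉ S')
    (hcard : S.ncard = S'.ncard)
    (f f₁ : K → K) (g : K → K) (lam lam' : K → K) (h : K → K)
    (hlam : Set.MapsTo lam {x : K | x ≠ 0} S ∧ Set.SurjOn lam {x : K | x ≠ 0} S)
    (hlam' : Set.MapsTo lam' {x : K | x ≠ 0} S' ∧ Set.SurjOn lam' {x : K | x ≠ 0} S')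
    (hgmaps : Set.MapsTo g S S')
    (hcomm : ∀ x : K, x ≠ 0 → lam' (f x) = g (lam x))
    (hh : ∀ s ∈ S, h s ≠ 0)
    (hfdef : ∀ x : K, x ≠ 0 → f x = f₁ x * h (lam x))
    (hf₁bij : Set.BijOn f₁ {x : K | x ≠ 0} {x : K | x ≠ 0})
    (hfbij : Set.BijOn f {x : K | x ≠ 0} {x : K | x ≠ 0})
    (hgbij : Set.BijOn g S S')
    (f₁inv finv ginv : K → K)
    (hf₁inv₁ : ∀ x : K, x ≠ 0 → f₁inv (f₁ x) = x)
    (hf₁inv₂ : ∀ x : K, x ≠ 0 → f₁ (f₁inv x) = x)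
    (hfinv₁ : ∀ x : K, x ≠ 0 → finv (f x) = x)
    (hfinv₂ : ∀ x : K, x ≠ 0 → f (finv x) = x)
    (hginv₁ : ∀ s ∈ S, ginv (g s) = s)
    (hginv₂ : ∀ s' ∈ S', g (ginv s') = s') :
    ∀ x : K, x ≠ 0 → finv x = f₁inv (x / h (ginv (lam' x))) := by
  intro x hx
  obtain ⟨y, hy, hfy⟩ := hfbij.surjOn (show x ∈ {x : K | x ≠ 0} from hx)
  have hy' : y ≠ 0 := hy
  have hlamy : lam y ∈ S := hlam.1 hy'
  have hfin : finv x = y := by rw [← hfy, hfinv₁ y hy']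
  have h1 : lam' x = g (lam y) := by rw [← hfy, hcomm y hy']
  have h2 : ginv (lam' x) = lam y := by rw [h1, hginv₁ _ hlamy]
  have h3 : x = f₁ y * h (lam y) := by rw [← hfy, hfdef y hy']
  have hhne : h (lam y) ≠ 0 := hh _ hlamy
  rw [hfin, h2, h3, mul_div_cancel_right₀ _ hhne, hf₁inv₁ y hy']
end

section
/- With d, q, ω, A_i as above, for any positive integer m and 0 ≤ i, j ≤ d−1: A_j(A_i(x)^m) = d·ω^{−j}·A_i(x)^m if j ≡ i·m (mod d), and A_j(A_i(x)^m) = 0 otherwise, for all x ∈ F_{q^d}. -/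
/-- Lemma 4.1(ii): `A_j(A_i(x)^m) = d·ω^{-j}·A_i(x)^m` if `j ≡ i·m (mod d)`, else `0`. -/
theorem Aj_of_Ai_pow_m (K L : Type) [Field K] [Fintype K] [Field L] [Fintype L] [Algebra K L]
    (d : ℕ) (hd : 1 < d) (hL : Fintype.card L = Fintype.card K ^ d)
    (hq : Fintype.card K % d = 1)
    (ω : K) (hω : orderOf ω = d)
    (A : ℕ → L → L)
    (hA : ∀ i x, A i x =
      ∑ t ∈ Finset.range d, algebraMap K L (ω ^ (i * t)) * x ^ Fintype.card K ^ (d - 1 - t)) :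
    ∀ (m : ℕ), 0 < m → ∀ i ≤ d - 1, ∀ j ≤ d - 1, ∀ x : L,
      (j % d = (i * m) % d →
        A j (A i x ^ m) = (d : L) * algebraMap K L ((ω ^ j)⁻¹) * A i x ^ m) ∧
      (j % d ≠ (i * m) % d → A j (A i x ^ m) = 0) := by
  intro m hm i hi j hj x
  obtain ⟨p, hc⟩ := CharP.exists K
  haveI : CharP K p := hc
  obtain ⟨nn, hp, hcard⟩ := FiniteField.card K p
  haveI : Fact p.Prime := ⟨hp⟩
  haveI : CharP L p := charP_of_injective_algebraMap (algebraMap K L).injective p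
  haveI : ExpChar L p := ExpChar.prime hp
  rw [hcard] at hq hL hA
  set f := algebraMap K L with hf
  set Q : ℕ := p ^ (nn : ℕ) with hQ
  have hωd : ω ^ d = 1 := by rw [← hω]; exact pow_orderOf_eq_one ω
  have hω0 : ω ≠ 0 := by
    intro h
    rw [h, zero_pow (by omega : d ≠ 0)] at hωd
    exact zero_ne_one hωd
  have hωq : ω ^ Q = ω := by
    conv_lhs => rw [← pow_mod_orderOf, hω, hq, pow_one]
  have hfrob : ∀ z : L, z ^ Q ^ d = z := by
    intro z
    rw [← hL]; exact FiniteField.pow_card z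
  -- key step: A a y ^ Q = f (ω ^ a) * A a y
  have step : ∀ (a : ℕ) (y : L), A a y ^ Q = f (ω ^ a) * A a y := by
    intro a y
    rw [hA]
    rw [show (∑ t ∈ Finset.range d, f (ω ^ (a * t)) * y ^ Q ^ (d - 1 - t)) ^ Q
        = ∑ t ∈ Finset.range d, (f (ω ^ (a * t)) * y ^ Q ^ (d - 1 - t)) ^ Q from
      by rw [hQ]; exact sum_pow_char_pow (R := L) (p := p) (n := (nn : ℕ)) (Finset.range d) _]
    have h1 : ∀ t ∈ Finset.range d, (f (ω ^ (a * t)) * y ^ Q ^ (d - 1 - t)) ^ Q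
        = f (ω ^ (a * t)) * y ^ Q ^ (d - t) := by
      intro t ht
      rw [Finset.mem_range] at ht
      have e1 : (ω ^ (a * t)) ^ Q = ω ^ (a * t) := by rw [pow_right_comm, hωq]
      have e2 : (y ^ Q ^ (d - 1 - t)) ^ Q = y ^ Q ^ (d - t) := by
        rw [← pow_mul, ← pow_succ]
        have : d - 1 - t + 1 = d - t := by omega
        rw [this]
      rw [mul_pow, ← map_pow, e1, e2]
    rw [Finset.sum_congr rfl h1]
    obtain ⟨e, rfl⟩ : ∃ e, d = e + 1 := ⟨d - 1, by omega⟩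
    rw [Finset.sum_range_succ', Finset.mul_sum, Finset.sum_range_succ]
    have hlast : f (ω ^ a) * (f (ω ^ (a * e)) * y ^ Q ^ (e + 1 - 1 - e)) = y := by
      rw [← mul_assoc, ← map_mul, ← pow_add]
      have h2 : a + a * e = (e + 1) * a := by ring
      rw [h2, pow_mul, hωd, one_pow, map_one, one_mul]
      norm_num
    rw [hlast]
    congr 1
    · refine Finset.sum_congr rfl fun t ht => ?_
      have h2 : a * (t + 1) = a + a * t := by ring
      have h3 : e + 1 - (t + 1) = e + 1 - 1 - t := by omega
      rw [h2, h3, pow_add, map_mul, mul_assoc]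
    · rw [mul_zero, pow_zero, map_one, one_mul, Nat.sub_zero, hfrob]
  -- iterated: A i x ^ (Q ^ k) = f (ω ^ (i * k)) * A i x
  have step2 : ∀ k : ℕ, A i x ^ Q ^ k = f (ω ^ (i * k)) * A i x := by
    intro k
    induction k with
    | zero => simp
    | succ k ih =>
      rw [pow_succ, pow_mul, ih, mul_pow, step, ← mul_assoc, ← map_pow, ← map_mul]
      congr 2
      rw [pow_right_comm, hωq, ← pow_add, Nat.mul_succ]
  set y := A i x with hy
  have hterm : ∀ k : ℕ, (y ^ m) ^ Q ^ k = f (ω ^ (i * k * m)) * y ^ m := by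
    intro k
    rw [← pow_mul, mul_comm m, pow_mul, step2, mul_pow, ← map_pow, ← pow_mul]
  have hAj : A j (y ^ m)
      = (∑ t ∈ Finset.range d, f (ω ^ (j * t + i * (d - 1 - t) * m))) * y ^ m := by
    rw [hA, Finset.sum_mul]
    refine Finset.sum_congr rfl fun t ht => ?_
    rw [hterm, pow_add, map_mul]; ring
  constructor
  · intro h
    have h' : j ≡ i * m [MOD d] := h
    have hconst : ∀ t ∈ Finset.range d,
        f (ω ^ (j * t + i * (d - 1 - t) * m)) = f ((ω ^ j)⁻¹) := by
      intro t ht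
      rw [Finset.mem_range] at ht
      congr 1
      have hdiv : d ∣ j + (j * t + i * (d - 1 - t) * m) := by
        have h1 : j + (j * t + i * (d - 1 - t) * m)
            ≡ i * m + (i * m * t + i * (d - 1 - t) * m) [MOD d] :=
          h'.add ((h'.mul_right t).add_right _)
        have h2 : i * m + (i * m * t + i * (d - 1 - t) * m) = i * m * d := by
          have ht' : 1 + t + (d - 1 - t) = d := by omega
          calc i * m + (i * m * t + i * (d - 1 - t) * m)
              = i * m * (1 + t + (d - 1 - t)) := by ring
            _ = i * m * d := by rw [ht']
        have h3 : j + (j * t + i * (d - 1 - t) * m) ≡ 0 [MOD d] := by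
          refine h1.trans ?_
          rw [h2]
          exact (Nat.modEq_zero_iff_dvd).mpr ⟨i * m, mul_comm _ _⟩
        exact (Nat.modEq_zero_iff_dvd).mp h3
      have h1 : ω ^ j * ω ^ (j * t + i * (d - 1 - t) * m) = 1 := by
        rw [← pow_add]
        exact orderOf_dvd_iff_pow_eq_one.mp (hω ▸ hdiv)
      exact (inv_eq_of_mul_eq_one_right h1).symm
    rw [hAj, Finset.sum_congr rfl hconst, Finset.sum_const, Finset.card_range,
      nsmul_eq_mul]
  · intro h
    have h' : ¬ j ≡ i * m [MOD d] := h
    set ζ : K := ω ^ j * (ω ^ (i * m))⁻¹ with hζ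
    have hζd : ζ ^ d = 1 := by
      rw [hζ, mul_pow, inv_pow, pow_right_comm, hωd, one_pow,
        pow_right_comm, hωd, one_pow, inv_one, mul_one]
    have hζ1 : ζ ≠ 1 := by
      intro hone
      apply h'
      have he : ω ^ j = ω ^ (i * m) := by
        have h4 := congrArg (· * ω ^ (i * m)) hone
        simpa [hζ, mul_assoc, inv_mul_cancel₀ (pow_ne_zero (i * m) hω0)] using h4
      set u : Kˣ := Units.mk0 ω hω0 with hu
      have hu' : u ^ j = u ^ (i * m) := Units.ext (by simpa [hu] using he)
      have hou : orderOf u = d := by rw [← orderOf_units]; exact hω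
      have h5 := pow_eq_pow_iff_modEq.mp hu'
      rwa [hou] at h5
    have hterm2 : ∀ t ∈ Finset.range d,
        ω ^ (j * t + i * (d - 1 - t) * m) = ω ^ (i * (d - 1) * m) * ζ ^ t := by
      intro t ht
      rw [Finset.mem_range] at ht
      have hz : ζ ^ t = ω ^ (j * t) * (ω ^ (i * m * t))⁻¹ := by
        rw [hζ, mul_pow, inv_pow, ← pow_mul, ← pow_mul]
      have hexp : j * t + i * (d - 1 - t) * m + i * m * t = i * (d - 1) * m + j * t := by
        have h5 : i * (d - 1 - t) * m + i * m * t = i * (d - 1) * m := by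
          have h6 : i * (d - 1 - t) * m + i * m * t = i * ((d - 1 - t) + t) * m := by ring
          rw [h6]
          congr 2
          omega
        omega
      have hne : ω ^ (i * m * t) ≠ 0 := pow_ne_zero _ hω0
      calc ω ^ (j * t + i * (d - 1 - t) * m)
          = ω ^ (j * t + i * (d - 1 - t) * m) * (ω ^ (i * m * t) * (ω ^ (i * m * t))⁻¹) := by
            rw [mul_inv_cancel₀ hne, mul_one]
        _ = (ω ^ (j * t + i * (d - 1 - t) * m) * ω ^ (i * m * t)) * (ω ^ (i * m * t))⁻¹ := by
            ring
        _ = (ω ^ (i * (d - 1) * m) * ω ^ (j * t)) * (ω ^ (i * m * t))⁻¹ := by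
            rw [← pow_add, hexp, pow_add]
        _ = ω ^ (i * (d - 1) * m) * ζ ^ t := by rw [hz]; ring
    have hsum : (∑ t ∈ Finset.range d, f (ω ^ (j * t + i * (d - 1 - t) * m))) = 0 := by
      rw [Finset.sum_congr rfl fun t ht => congrArg f (hterm2 t ht)]
      rw [← map_sum, ← Finset.mul_sum, geom_sum_eq hζ1, hζd, sub_self, zero_div,
        mul_zero, map_zero]
    rw [hAj, hsum, zero_mul]
end

section
/- With d, q, ω, A_i as above, let B_i = {A_i(x) : x ∈ F_{q^d}} for 0 ≤ i ≤ d−1. Then B_0 = F_q, and for 1 ≤ i ≤ d−1, any two nonzero elements of B_i differ by a factor in F_q^*; that is, B_i = {0} ∪ y_i·F_q^* for any fixed nonzero y_i ∈ B_i. -/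
open Finset Polynomial

/-- Lemma 4.2: `B_0 = F_q` and for `1 ≤ i ≤ d-1`, `B_i = {0} ∪ y·F_q^*` for any
fixed nonzero `y ∈ B_i`. -/
theorem image_of_Ai (K L : Type) [Field K] [Fintype K] [Field L] [Fintype L] [Algebra K L]
    (d : ℕ) (hd : 1 < d) (hL : Fintype.card L = Fintype.card K ^ d)
    (hq : Fintype.card K % d = 1)
    (ω : K) (hω : orderOf ω = d)
    (A : ℕ → L → L)
    (hA : ∀ i x, A i x =
      ∑ t ∈ Finset.range d, algebraMap K L (ω ^ (i * t)) * x ^ Fintype.card K ^ (d - 1 - t)) :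
    Set.range (A 0) = Set.range (algebraMap K L) ∧
    ∀ i, 1 ≤ i → i ≤ d - 1 → ∀ y ∈ Set.range (A i), y ≠ 0 →
      Set.range (A i) = insert (0 : L) {z : L | ∃ c : K, c ≠ 0 ∧ z = algebraMap K L c * y} := by
  classical
  set q := Fintype.card K with hqdef
  have hq2 : 2 ≤ q := Fintype.one_lt_card
  have hinj : Function.Injective (algebraMap K L) := (algebraMap K L).injective
  -- characteristic
  obtain ⟨p, hp⟩ := CharP.exists K
  have hpprime : Fact p.Prime := ⟨CharP.char_is_prime K p⟩
  haveI : CharP L p := charP_of_injective_algebraMap hinj p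
  haveI : ExpChar L p := ExpChar.prime hpprime.out
  obtain ⟨n, -, hqn⟩ := FiniteField.card K p
  -- fixed points of x ↦ x^q are exactly the image of K
  have hfix : ∀ u : L, u ^ q = u → ∃ c : K, algebraMap K L c = u := by
    intro u hu
    set Q : L[X] := X ^ q - X with hQ
    have hQne : Q ≠ 0 := by
      intro h
      have h2 : (X : L[X]) ^ q = X := sub_eq_zero.mp h
      have := congrArg natDegree h2
      rw [natDegree_X_pow, natDegree_X] at this
      omega
    have hQdeg : Q.natDegree ≤ q := by
      refine (natDegree_sub_le _ _).trans ?_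
      simp only [natDegree_X_pow, natDegree_X]
      omega
    have hTsub : (Finset.univ.image (algebraMap K L)) ⊆ Q.roots.toFinset := by
      intro a ha
      obtain ⟨b, -, rfl⟩ := Finset.mem_image.mp ha
      rw [Multiset.mem_toFinset, mem_roots hQne]
      simp only [hQ, IsRoot.def, eval_sub, eval_pow, eval_X]
      rw [← map_pow, FiniteField.pow_card, sub_self]
    have hcard : Q.roots.toFinset.card ≤ (Finset.univ.image (algebraMap K L)).card := by
      rw [Finset.card_image_of_injective _ hinj, Finset.card_univ]
      exact ((Multiset.toFinset_card_le _).trans ((card_roots' Q).trans hQdeg))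
    have hT := Finset.eq_of_subset_of_card_le hTsub hcard
    have hu' : u ∈ Q.roots.toFinset := by
      rw [Multiset.mem_toFinset, mem_roots hQne]
      simp only [hQ, IsRoot.def, eval_sub, eval_pow, eval_X, hu, sub_self]
    rw [← hT] at hu'
    obtain ⟨c, -, hc⟩ := Finset.mem_image.mp hu'
    exact ⟨c, hc⟩
  -- key twist identity
  have hkey : ∀ i x, (A i x) ^ q = algebraMap K L (ω ^ i) * A i x := by
    intro i x
    rw [hA]
    have hqexp : q = p ^ (n:ℕ) := hqn
    rw [hqexp, sum_pow_char_pow, ← hqexp]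
    have hstep : ∀ t ∈ Finset.range d,
        (algebraMap K L (ω ^ (i * t)) * x ^ q ^ (d - 1 - t)) ^ q
          = algebraMap K L (ω ^ (i * t)) * x ^ q ^ (d - t) := by
      intro t ht
      rw [Finset.mem_range] at ht
      rw [mul_pow, ← map_pow, FiniteField.pow_card, ← pow_mul, ← pow_succ]
      have he : d - 1 - t + 1 = d - t := by omega
      rw [he]
    rw [Finset.sum_congr rfl hstep]
    rw [Finset.mul_sum]
    have hrhs : ∀ t ∈ Finset.range d,
        algebraMap K L (ω ^ i) * (algebraMap K L (ω ^ (i * t)) * x ^ q ^ (d - 1 - t))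
          = algebraMap K L (ω ^ (i * (t + 1))) * x ^ q ^ (d - 1 - t) := by
      intro t ht
      rw [← mul_assoc, ← map_mul, ← pow_add]
      congr 3
      ring
    rw [Finset.sum_congr rfl hrhs]
    -- reindex: d = (d-1)+1
    obtain ⟨m, rfl⟩ : ∃ m, d = m + 1 := ⟨d - 1, by omega⟩
    rw [Finset.sum_range_succ' (fun t => algebraMap K L (ω ^ (i * t)) * x ^ q ^ (m + 1 - t)) m,
      Finset.sum_range_succ]
    congr 1
    · refine Finset.sum_congr rfl fun t ht => ?_
      rw [Finset.mem_range] at ht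
      have he : m + 1 - (t + 1) = m + 1 - 1 - t := by omega
      rw [he]
    · have h1 : ω ^ (i * (m + 1)) = 1 := by
        rw [mul_comm, pow_mul, ← hω, pow_orderOf_eq_one, one_pow]
      have h2 : x ^ q ^ (m + 1) = x := by
        rw [← hL, FiniteField.pow_card]
      simp [h1, h2]
  -- K-linearity
  have hlin : ∀ i (c : K) (x : L), A i (algebraMap K L c * x) = algebraMap K L c * A i x := by
    intro i c x
    rw [hA, hA, Finset.mul_sum]
    refine Finset.sum_congr rfl fun t ht => ?_
    rw [mul_pow, ← map_pow, FiniteField.pow_card_pow]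
    ring
  have hzero : ∀ i, A i 0 = 0 := by
    intro i
    rw [hA]
    refine Finset.sum_eq_zero fun t ht => ?_
    rw [zero_pow (by positivity), mul_zero]
  -- A 0 is not identically zero
  have hne : ∃ x : L, A 0 x ≠ 0 := by
    by_contra h
    push_neg at h
    set P : L[X] := ∑ t ∈ Finset.range d, X ^ q ^ (d - 1 - t) with hP
    have hPdeg : P.natDegree < Fintype.card L := by
      have h1 : P.natDegree ≤ q ^ (d - 1) := by
        refine natDegree_sum_le_of_forall_le _ _ fun t ht => ?_
        rw [natDegree_X_pow]
        exact Nat.pow_le_pow_right (by omega) (by omega)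
      have h2 : q ^ (d - 1) < q ^ d := Nat.pow_lt_pow_right (by omega) (by omega)
      omega
    have hPeval : ∀ x : L, P.eval x = 0 := by
      intro x
      have := h x
      rw [hA] at this
      simpa [hP, eval_finset_sum] using this
    have hP0 : P = 0 :=
      eq_zero_of_natDegree_lt_card_of_eval_eq_zero P Function.injective_id
        (fun x => hPeval x) hPdeg
    have hcoeff : P.coeff (q ^ (d - 1)) = 1 := by
      rw [hP, finset_sum_coeff]
      have : ∀ t ∈ Finset.range d,
          ((X : L[X]) ^ q ^ (d - 1 - t)).coeff (q ^ (d - 1)) = if t = 0 then 1 else 0 := by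
        intro t ht
        rw [Finset.mem_range] at ht
        rw [coeff_X_pow]
        congr 1
        simp only [eq_iff_iff]
        constructor
        · intro he
          have := Nat.pow_right_injective hq2 he
          omega
        · rintro rfl; rfl
      rw [Finset.sum_congr rfl this, Finset.sum_ite_eq' (Finset.range d) 0 (fun _ => (1 : L))]
      rw [if_pos (Finset.mem_range.mpr (by omega))]
    rw [hP0] at hcoeff
    simp at hcoeff
  constructor
  · -- part 1
    apply Set.eq_of_subset_of_subset
    · rintro - ⟨x, rfl⟩
      have h := hkey 0 x
      simp only [pow_zero, map_one, one_mul] at h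
      obtain ⟨c, hc⟩ := hfix _ h
      exact ⟨c, hc⟩
    · rintro - ⟨a, rfl⟩
      obtain ⟨x, hx⟩ := hne
      have h := hkey 0 x
      simp only [pow_zero, map_one, one_mul] at h
      obtain ⟨c, hc⟩ := hfix _ h
      have hc0 : c ≠ 0 := by rintro rfl; simp at hc; exact hx hc.symm
      refine ⟨algebraMap K L (a * c⁻¹) * x, ?_⟩
      rw [hlin, ← hc, ← map_mul]
      congr 1
      field_simp
  · -- part 2
    intro i hi1 hi2 y hy hyne
    obtain ⟨x₀, hx₀⟩ := hy
    subst hx₀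
    have hωne : (ω : K) ≠ 0 := by
      intro h
      have := pow_orderOf_eq_one ω
      rw [hω, h, zero_pow (by omega)] at this
      exact zero_ne_one this
    have hωine : algebraMap K L (ω ^ i) ≠ 0 :=
      (map_ne_zero (algebraMap K L)).mpr (pow_ne_zero i hωne)
    apply Set.eq_of_subset_of_subset
    · rintro - ⟨x, rfl⟩
      by_cases hz : A i x = 0
      · rw [hz]; exact Set.mem_insert 0 _
      · right
        have hu : (A i x / A i x₀) ^ q = A i x / A i x₀ := by
          rw [div_pow, hkey, hkey, mul_div_mul_left _ _ hωine]
        obtain ⟨c, hc⟩ := hfix _ hu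
        have hun : A i x / A i x₀ ≠ 0 := div_ne_zero hz hyne
        refine ⟨c, ?_, ?_⟩
        · rintro rfl; rw [map_zero] at hc; exact hun hc.symm
        · rw [hc, div_mul_cancel₀ _ hyne]

    · intro z hz
      rcases Set.mem_insert_iff.mp hz with rfl | ⟨c, hc0, rfl⟩
      · exact ⟨0, hzero i⟩
      · exact ⟨algebraMap K L c * x₀, hlin i c x₀⟩
end

section
/- Let d > 1, q ≡ 1 (mod d) a prime power, ω a primitive d-th root of unity in F_q, A_i(x) = Σ_{t=0}^{d−1} ω^{it} x^{q^{d−1−t}}, m₁, …, m_{d−1} positive integers, u₁, …, u_{d−1} ∈ F_q, and g ∈ F_q[x]. Then f(x) = g(A_0(x)) + Σ_{t=1}^{d−1} u_t A_t(x)^{m_t} is a permutation of F_{q^d} if and only if {0} ∪ {i·m_i mod d : 1 ≤ i ≤ d−1} is a complete residue system modulo d, all u_i are nonzero, gcd(m₁⋯m_{d−1}, q−1) = 1, and g is a permutation of F_q. -/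
open Finset Function

lemma aux_pow_inj (K : Type) [Field K] [Fintype K] (n : ℕ) (hn : 0 < n)
    (h : Nat.Coprime n (Fintype.card K - 1)) : Function.Injective (fun a : K => a ^ n) := by
  classical
  intro a b hab
  simp only at hab
  rcases eq_or_ne a 0 with rfl | ha
  · rcases eq_or_ne b 0 with rfl | hb
    · rfl
    · exact absurd (pow_eq_zero_iff hn.ne' |>.mp (by simpa [zero_pow hn.ne'] using hab.symm)) hb
  · rcases eq_or_ne b 0 with rfl | hb
    · exact absurd (pow_eq_zero_iff hn.ne' |>.mp (by simpa [zero_pow hn.ne'] using hab)) ha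
    · have hc : (Nat.card Kˣ).Coprime n := by
        rw [Nat.card_eq_fintype_card, Fintype.card_units]
        exact h.symm
      have key : (powCoprime hc) (Units.mk0 a ha) = (powCoprime hc) (Units.mk0 b hb) := by
        ext
        simpa [powCoprime] using hab
      have := (powCoprime hc).injective key
      simpa [Units.ext_iff] using this

lemma aux_pow_surj_coprime (K : Type) [Field K] [Fintype K] (n : ℕ)
    (h : Function.Surjective (fun a : K => a ^ n)) :
    Nat.Coprime n (Fintype.card K - 1) := by
  classical
  have hK : 1 < Fintype.card K := Fintype.one_lt_card
  have hn : 0 < n := by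
    by_contra hn0
    push_neg at hn0
    interval_cases n
    obtain ⟨a, ha⟩ := h 0
    simp at ha
  have hinj : Function.Injective (fun a : K => a ^ n) := Finite.injective_iff_surjective.mpr h
  by_contra hc
  set k := Nat.gcd n (Fintype.card K - 1) with hk
  have hk1 : k ≠ 1 := hc
  have hkpos : 0 < k := Nat.gcd_pos_of_pos_left _ hn
  have hk2 : 2 ≤ k := by omega
  obtain ⟨gen, hgen⟩ := IsCyclic.exists_generator (α := Kˣ)
  have hog : orderOf gen = Fintype.card K - 1 := by
    have := orderOf_eq_card_of_forall_mem_zpowers hgen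
    rwa [Nat.card_eq_fintype_card, Fintype.card_units] at this
  have hkdvd : k ∣ Fintype.card K - 1 := Nat.gcd_dvd_right _ _
  set ζ : Kˣ := gen ^ ((Fintype.card K - 1) / k) with hζ
  have hoζ : orderOf ζ = k := by
    rw [hζ, orderOf_pow, hog, Nat.gcd_eq_right (Nat.div_dvd_of_dvd hkdvd),
      Nat.div_div_self hkdvd (by omega)]
  have hζ1 : ζ ≠ 1 := by
    intro h1
    rw [h1, orderOf_one] at hoζ
    omega
  have hζn : ζ ^ n = 1 := by
    have : orderOf ζ ∣ n := hoζ ▸ Nat.gcd_dvd_left _ _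
    exact orderOf_dvd_iff_pow_eq_one.mp this
  apply hζ1
  have h1 : ((ζ : K)) ^ n = (1 : K) ^ n := by
    rw [one_pow, ← Units.val_pow_eq_pow_val, hζn, Units.val_one]
  exact Units.ext (hinj h1)

set_option maxHeartbeats 2000000 in
/-- Theorem 4.1 (permutation criterion): `f(x) = g(A_0(x)) + Σ u_t A_t(x)^{m_t}` is a
permutation of `F_{q^d}` iff `{0} ∪ {i·m_i}` is a complete residue system mod `d`,
all `u_i` are nonzero, `gcd(m₁⋯m_{d-1}, q-1) = 1` and `g` permutes `F_q`. -/
theorem pp_criterion (K L : Type) [Field K] [Fintype K] [Field L] [Fintype L] [Algebra K L]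
    (d : ℕ) (hd : 1 < d) (hL : Fintype.card L = Fintype.card K ^ d)
    (hq : Fintype.card K % d = 1)
    (ω : K) (hω : orderOf ω = d)
    (A : ℕ → L → L)
    (hA : ∀ i x, A i x =
      ∑ t ∈ Finset.range d, algebraMap K L (ω ^ (i * t)) * x ^ Fintype.card K ^ (d - 1 - t))
    (m : ℕ → ℕ) (hm : ∀ i, 1 ≤ i → i ≤ d - 1 → 0 < m i)
    (u : ℕ → K) (g : Polynomial K)
    (f : L → L)
    (hf : ∀ x : L, f x =
      Polynomial.aeval (A 0 x) g +
        ∑ t ∈ Finset.Icc 1 (d - 1), algebraMap K L (u t) * A t x ^ m t) :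
    Function.Bijective f ↔
      (Function.Bijective (fun i : Fin d => (((i : ℕ) * m (i : ℕ) : ℕ) : ZMod d)) ∧
       (∀ i, 1 ≤ i → i ≤ d - 1 → u i ≠ 0) ∧
       Nat.gcd (∏ i ∈ Finset.Icc 1 (d - 1), m i) (Fintype.card K - 1) = 1 ∧
       Function.Bijective (fun c : K => Polynomial.eval c g)) := by
  classical
  haveI : NeZero d := ⟨by omega⟩
  set r : Fin d → ZMod d := fun i : Fin d => (((i : ℕ) * m (i : ℕ) : ℕ) : ZMod d) with hr
  set q := Fintype.card K with hqdef
  have hq2 : 1 < q := Fintype.one_lt_card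
  have hωd : ω ^ d = 1 := hω ▸ pow_orderOf_eq_one ω
  have hω0 : ω ≠ 0 := by
    intro h
    rw [h, zero_pow (by omega : d ≠ 0)] at hωd
    exact one_ne_zero hωd.symm
  have hdq : d ∣ q - 1 := by
    have h1 : orderOf (Units.mk0 ω hω0) = d := by
      rw [← orderOf_units, Units.val_mk0]
      exact hω
    have h2 := orderOf_dvd_card (x := Units.mk0 ω hω0)
    rwa [h1, Fintype.card_units] at h2
  have hq3 : 3 ≤ q := by
    have := Nat.le_of_dvd (by omega) hdq
    omega
  -- characteristic and q-Frobenius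
  obtain ⟨nn, hpprime, hcard⟩ := FiniteField.card K (ringChar K)
  haveI : Fact (ringChar K).Prime := ⟨hpprime⟩
  haveI hpL : CharP L (ringChar K) :=
    charP_of_injective_ringHom (algebraMap K L).injective (ringChar K)
  have hφ : ∀ y : L, iterateFrobenius L (ringChar K) nn y = y ^ q := fun y => by
    rw [iterateFrobenius_def, ← hcard]
  have hdL : (d : L) ≠ 0 := by
    rw [Ne, CharP.cast_eq_zero_iff L (ringChar K) d]
    intro hpd
    have h1 : ringChar K ∣ q - 1 := hpd.trans hdq
    have h2 : ringChar K ∣ q := by rw [hqdef, hcard]; exact dvd_pow_self _ (by positivity)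
    have h3 := Nat.dvd_sub h2 h1
    rw [Nat.sub_sub_self (by omega)] at h3
    exact hpprime.one_lt.ne' (Nat.dvd_one.mp h3)
  have hKq : ∀ a : K, a ^ q = a := fun a => FiniteField.pow_card a
  have hLq : ∀ y : L, y ^ q ^ d = y := fun y => by
    rw [← hL]; exact FiniteField.pow_card y
  have halg : ∀ a : K, (algebraMap K L a) ^ q = algebraMap K L a := fun a => by
    rw [← map_pow, hKq]
  have hainj : Function.Injective (algebraMap K L) := (algebraMap K L).injective
  have hvalcast : ∀ j : ZMod d, ((j.val : ℕ) : ZMod d) = j := fun j =>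
    ZMod.natCast_rightInverse j
  -- the eigenspaces
  set V : ZMod d → Set L := fun j => {y | y ^ q = algebraMap K L (ω ^ j.val) * y} with hVdef
  have hcω : ∀ n : ℕ, algebraMap K L (ω ^ (((n : ZMod d)).val)) = algebraMap K L (ω ^ n) := by
    intro n
    congr 1
    rw [ZMod.val_natCast]
    conv_lhs => rw [← hω]
    exact pow_mod_orderOf ω n
  have hmemV : ∀ (n : ℕ) (y : L), y ∈ V (n : ZMod d) ↔ y ^ q = algebraMap K L (ω ^ n) * y := by
    intro n y
    simp only [hVdef, Set.mem_setOf_eq, hcω]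
  have hV0 : ∀ a : K, algebraMap K L a ∈ V 0 := by
    intro a
    have h0 : ((0 : ℕ) : ZMod d) = 0 := Nat.cast_zero
    rw [← h0, hmemV]
    simp [halg a]
  have hVzero : ∀ j, (0 : L) ∈ V j := by
    intro j
    simp only [hVdef, Set.mem_setOf_eq]
    rw [zero_pow (by omega : q ≠ 0), mul_zero]
  have hVadd : ∀ j (y z : L), y ∈ V j → z ∈ V j → y + z ∈ V j := by
    intro j y z hy hz
    simp only [hVdef, Set.mem_setOf_eq] at hy hz ⊢
    have hfr : (y + z) ^ q = y ^ q + z ^ q := by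
      rw [← hφ, ← hφ, ← hφ, map_add]
    rw [hfr, hy, hz, mul_add]
  have hVmul : ∀ i j (y z : L), y ∈ V i → z ∈ V j → y * z ∈ V (i + j) := by
    intro i j y z hy hz
    simp only [hVdef, Set.mem_setOf_eq] at hy hz ⊢
    have hc : algebraMap K L (ω ^ (i + j).val)
        = algebraMap K L (ω ^ i.val) * algebraMap K L (ω ^ j.val) := by
      rw [← map_mul, ← pow_add]
      have hcast : ((i.val + j.val : ℕ) : ZMod d) = i + j := by
        push_cast
        rw [hvalcast, hvalcast]
      rw [← hcast, hcω]
    rw [mul_pow, hy, hz, hc]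
    ring
  have hVscal : ∀ j (a : K) (y : L), y ∈ V j → algebraMap K L a * y ∈ V j := by
    intro j a y hy
    have := hVmul 0 j _ _ (hV0 a) hy
    rwa [zero_add] at this
  have hVpow : ∀ (i : ZMod d) (y : L), y ∈ V i → ∀ k : ℕ, y ^ k ∈ V ((k : ZMod d) * i) := by
    intro i y hy k
    induction k with
    | zero => simpa using hV0 1
    | succ k ih =>
      have h1 := hVmul _ _ _ _ ih hy
      rw [← pow_succ] at h1
      convert h1 using 2
      push_cast
      ring
  -- A i x lies in V i
  have hA_mem : ∀ (i : ℕ) (x : L), A i x ∈ V (i : ZMod d) := by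
    intro i x
    rw [hmemV, hA]
    have lhs : (∑ t ∈ range d, algebraMap K L (ω ^ (i * t)) * x ^ q ^ (d - 1 - t)) ^ q
        = ∑ t ∈ range d, algebraMap K L (ω ^ (i * t)) * x ^ q ^ (d - t) := by
      rw [← hφ, map_sum]
      refine Finset.sum_congr rfl fun t ht => ?_
      rw [hφ, mul_pow, halg, ← pow_mul, ← pow_succ]
      have he : d - 1 - t + 1 = d - t := by
        have := Finset.mem_range.mp ht
        omega
      rw [he]
    rw [lhs, Finset.mul_sum]
    obtain ⟨e, hde⟩ : ∃ e, d = e + 1 := ⟨d - 1, by omega⟩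
    rw [hde]
    rw [Finset.sum_range_succ' (fun t => algebraMap K L (ω ^ (i * t)) * x ^ q ^ (e + 1 - t)) e]
    rw [Finset.sum_range_succ
      (fun t => algebraMap K L (ω ^ i) * (algebraMap K L (ω ^ (i * t)) * x ^ q ^ (e + 1 - 1 - t))) e]
    congr 1
    · refine Finset.sum_congr rfl fun t ht => ?_
      rw [← mul_assoc, ← map_mul, ← pow_add]
      have h1 : i * (t + 1) = i + i * t := by ring
      have h2 : e + 1 - (t + 1) = e + 1 - 1 - t := by omega
      rw [h1, h2]
    · rw [← mul_assoc, ← map_mul, ← pow_add]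
      have h1 : e + 1 - 1 - e = 0 := by omega
      rw [h1, pow_zero, pow_one]
      have h2 : i + i * e = i * (e + 1) := by ring
      rw [h2]
      have h3 : ω ^ (i * (e + 1)) = 1 := by
        rw [mul_comm, pow_mul, ← hde, hωd, one_pow]
      rw [h3, map_one, one_mul]
      simp only [Nat.mul_zero, pow_zero, map_one, one_mul, Nat.sub_zero]
      rw [← hde]
      exact hLq x
  -- recovery of x from the A i x
  have hrecover : ∀ x : L, ∑ i ∈ range d, algebraMap K L (ω ^ i) * A i x = (d : L) * x := by
    intro x
    have step1 : ∀ i, algebraMap K L (ω ^ i) * A i x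
        = ∑ t ∈ range d, algebraMap K L (ω ^ ((t + 1) * i)) * x ^ q ^ (d - 1 - t) := by
      intro i
      rw [hA, Finset.mul_sum]
      refine Finset.sum_congr rfl fun t ht => ?_
      rw [← mul_assoc, ← map_mul, ← pow_add]
      have h1 : i + i * t = (t + 1) * i := by ring
      rw [h1]
    rw [Finset.sum_congr rfl fun i _ => step1 i]
    rw [Finset.sum_comm]
    have step2 : ∀ t, ∑ i ∈ range d, algebraMap K L (ω ^ ((t + 1) * i)) * x ^ q ^ (d - 1 - t)
        = algebraMap K L (∑ i ∈ range d, (ω ^ (t + 1)) ^ i) * x ^ q ^ (d - 1 - t) := by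
      intro t
      rw [map_sum, Finset.sum_mul]
      refine Finset.sum_congr rfl fun i _ => ?_
      rw [← pow_mul]
    rw [Finset.sum_congr rfl fun t _ => step2 t]
    rw [Finset.sum_eq_single_of_mem (d - 1) (Finset.mem_range.mpr (by omega))]
    · have h1 : d - 1 + 1 = d := by omega
      rw [h1, hωd]
      simp only [one_pow, Finset.sum_const, Finset.card_range, nsmul_eq_mul, mul_one]
      rw [map_natCast]
      have h2 : d - 1 - (d - 1) = 0 := by omega
      rw [h2, pow_zero, pow_one]
    · intro t ht htne
      have htlt := Finset.mem_range.mp ht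
      have hnd : ¬ (d ∣ (t + 1)) := by
        intro hdvd
        have := Nat.le_of_dvd (by omega) hdvd
        omega
      have hne1 : ω ^ (t + 1) ≠ 1 := by
        intro h1
        exact hnd (hω ▸ orderOf_dvd_iff_pow_eq_one.mpr h1)
      have hzero : (∑ i ∈ range d, (ω ^ (t + 1)) ^ i) = 0 := by
        rw [geom_sum_eq hne1, ← pow_mul, mul_comm, pow_mul, hωd, one_pow, sub_self, zero_div]
      rw [hzero, map_zero, zero_mul]
  -- cardinality bound for V j
  have hVcard_le : ∀ j : ZMod d, Nat.card (V j) ≤ q := by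
    intro j
    set P : Polynomial L := Polynomial.X ^ q - Polynomial.C (algebraMap K L (ω ^ j.val)) * Polynomial.X with hP
    have hc1 : P.coeff q = 1 := by
      rw [hP, Polynomial.coeff_sub, Polynomial.coeff_C_mul, Polynomial.coeff_X_pow,
        Polynomial.coeff_X, if_neg (show ¬(1 = q) by omega), if_pos rfl, mul_zero, sub_zero]
    have hPne : P ≠ 0 := by
      intro h0
      rw [h0, Polynomial.coeff_zero] at hc1
      exact one_ne_zero hc1.symm
    have hdeg : P.natDegree ≤ q := by
      rw [hP]
      refine le_trans (Polynomial.natDegree_sub_le _ _) (max_le ?_ ?_)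
      · simp
      · refine le_trans (Polynomial.natDegree_C_mul_le _ _) ?_
        simp only [Polynomial.natDegree_X]
        omega
    have hsub : V j ⊆ ↑(P.roots.toFinset) := by
      intro y hy
      simp only [hVdef, Set.mem_setOf_eq] at hy
      simp only [Finset.coe_sort_coe, Finset.mem_coe, Multiset.mem_toFinset]
      rw [Polynomial.mem_roots hPne]
      show P.IsRoot y
      rw [hP]
      simp only [Polynomial.IsRoot, Polynomial.eval_sub, Polynomial.eval_pow, Polynomial.eval_X,
        Polynomial.eval_mul, Polynomial.eval_C]
      rw [hy]
      ring
    calc Nat.card (V j) = (V j).ncard := Nat.card_coe_set_eq _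
      _ ≤ (↑(P.roots.toFinset) : Set L).ncard := Set.ncard_le_ncard hsub (Set.toFinite _)
      _ = P.roots.toFinset.card := by rw [Set.ncard_coe_finset]
      _ ≤ Multiset.card P.roots := Multiset.toFinset_card_le _
      _ ≤ P.natDegree := Polynomial.card_roots' P
      _ ≤ q := hdeg
  -- the sum map
  set σfun : (∀ j : ZMod d, V j) → L := fun z => ∑ j, (z j : L) with hσdef
  have hσsurj : Surjective σfun := by
    intro x
    have hmem : ∀ j : ZMod d, (d : L)⁻¹ * (algebraMap K L (ω ^ j.val) * A j.val x) ∈ V j := by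
      intro j
      have h1 : A j.val x ∈ V j := by
        have := hA_mem j.val x
        rwa [hvalcast j] at this
      have h2 := hVscal j (ω ^ j.val) _ h1
      have h3 : (d : L)⁻¹ = algebraMap K L ((d : K)⁻¹) := by
        rw [map_inv₀, map_natCast]
      rw [h3]
      exact hVscal j _ _ h2
    refine ⟨fun j => ⟨_, hmem j⟩, ?_⟩
    simp only [hσdef]
    show ∑ j : ZMod d, (d : L)⁻¹ * (algebraMap K L (ω ^ j.val) * A j.val x) = x
    rw [← Finset.mul_sum]
    have hsum : ∑ j : ZMod d, algebraMap K L (ω ^ j.val) * A j.val x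
        = ∑ i ∈ range d, algebraMap K L (ω ^ i) * A i x := by
      refine Finset.sum_nbij' (fun j : ZMod d => j.val) (fun i : ℕ => (i : ZMod d))
        (fun j _ => Finset.mem_range.mpr (ZMod.val_lt j))
        (fun i _ => Finset.mem_univ _)
        (fun j _ => hvalcast j)
        (fun i hi => ZMod.val_natCast_of_lt (Finset.mem_range.mp hi))
        (fun j _ => rfl)
    rw [hsum, hrecover, inv_mul_cancel_left₀ hdL]
  have hcardL : Nat.card L = q ^ d := by rw [Nat.card_eq_fintype_card, hL]
  have hprod_le : ∏ j : ZMod d, Nat.card (V j) ≤ q ^ d := by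
    calc ∏ j : ZMod d, Nat.card (V j) ≤ ∏ _j : ZMod d, q :=
          Finset.prod_le_prod' (fun i _ => hVcard_le i)
      _ = q ^ d := by rw [Finset.prod_const, Finset.card_univ, ZMod.card]
  have hge : q ^ d ≤ ∏ j : ZMod d, Nat.card (V j) := by
    have h1 := Nat.card_le_card_of_surjective σfun hσsurj
    rwa [Nat.card_pi, hcardL] at h1
  have hσbij : Bijective σfun := by
    refine (Nat.bijective_iff_surjective_and_card σfun).mpr ⟨hσsurj, ?_⟩
    rw [Nat.card_pi, hcardL]
    omega
  have hVcard : ∀ j : ZMod d, Nat.card (V j) = q := by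
    have hprodeq : ∏ j : ZMod d, Nat.card (V j) = q ^ d := by omega
    intro j0
    refine le_antisymm (hVcard_le j0) ?_
    have hsplit : ∏ j : ZMod d, Nat.card (V j)
        = Nat.card (V j0) * ∏ j ∈ Finset.univ.erase j0, Nat.card (V j) :=
      (Finset.mul_prod_erase _ _ (Finset.mem_univ j0)).symm
    have herase : ∏ j ∈ Finset.univ.erase j0, Nat.card (V j) ≤ q ^ (d - 1) := by
      calc ∏ j ∈ Finset.univ.erase j0, Nat.card (V j) ≤ ∏ _j ∈ Finset.univ.erase j0, q :=
            Finset.prod_le_prod' (fun i _ => hVcard_le i)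
        _ = q ^ (d - 1) := by
            rw [Finset.prod_const, Finset.card_erase_of_mem (Finset.mem_univ j0),
              Finset.card_univ, ZMod.card]
    have hqd : q ^ d = q * q ^ (d - 1) := by
      rw [← pow_succ']
      congr 1
      omega
    have hle : q * q ^ (d - 1) ≤ Nat.card (V j0) * q ^ (d - 1) := by
      calc q * q ^ (d - 1) = q ^ d := hqd.symm
        _ = Nat.card (V j0) * ∏ j ∈ Finset.univ.erase j0, Nat.card (V j) := by
            rw [← hsplit, hprodeq]
        _ ≤ Nat.card (V j0) * q ^ (d - 1) := Nat.mul_le_mul_left _ herase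
    exact Nat.le_of_mul_le_mul_right hle (by positivity)
  -- uniqueness of decompositions
  have huniq : ∀ (z w : ZMod d → L), (∀ j, z j ∈ V j) → (∀ j, w j ∈ V j) →
      (∑ j, z j) = (∑ j, w j) → ∀ j, z j = w j := by
    intro z w hz hw hsum j
    have h1 : σfun (fun j => ⟨z j, hz j⟩) = σfun (fun j => ⟨w j, hw j⟩) := by
      simp only [hσdef]
      exact hsum
    have h2 := hσbij.1 h1
    exact Subtype.ext_iff.mp (congrFun h2 j)
  -- V 0 is the base field
  have hV0eq : V 0 = Set.range (algebraMap K L) := by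
    refine (Set.eq_of_subset_of_ncard_le (fun y hy => ?_) ?_ (Set.toFinite _)).symm
    · obtain ⟨a, rfl⟩ := hy
      exact hV0 a
    · have h1 : (V 0).ncard = q := by rw [← Nat.card_coe_set_eq, hVcard 0]
      have h2 : (Set.range (algebraMap K L)).ncard = q := by
        rw [← Nat.card_coe_set_eq, Nat.card_range_of_injective hainj, Nat.card_eq_fintype_card]
      omega
  have hVex : ∀ j : ZMod d, ∃ e : L, e ∈ V j ∧ e ≠ 0 := by
    intro j
    by_contra hcon
    push_neg at hcon
    have hsub : V j ⊆ {0} := fun y hy => hcon y hy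
    have h1 := Set.ncard_le_ncard hsub (Set.finite_singleton 0)
    rw [Set.ncard_singleton] at h1
    have h2 : (V j).ncard = q := by rw [← Nat.card_coe_set_eq, hVcard j]
    omega
  have hline : ∀ (j : ZMod d) (e : L), e ∈ V j → e ≠ 0 →
      ∀ v ∈ V j, ∃ a : K, v = algebraMap K L a * e := by
    intro j e he he0 v hv
    set θ : K → V j := fun a => ⟨algebraMap K L a * e, hVscal j a e he⟩ with hθ
    have hθinj : Injective θ := by
      intro a b hab
      have h1 : algebraMap K L a * e = algebraMap K L b * e := Subtype.ext_iff.mp hab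
      exact hainj (mul_right_cancel₀ he0 h1)
    have hθbij : Bijective θ := by
      refine (Nat.bijective_iff_injective_and_card θ).mpr ⟨hθinj, ?_⟩
      rw [hVcard j, Nat.card_eq_fintype_card]
    obtain ⟨a, ha⟩ := hθbij.2 ⟨v, hv⟩
    exact ⟨a, (Subtype.ext_iff.mp ha).symm⟩
  -- the components of f
  set T : L → ZMod d → L := fun x j =>
    (if j = 0 then Polynomial.aeval (A 0 x) g else 0) +
      ∑ t ∈ (Finset.Icc 1 (d - 1)).filter (fun t => ((t * m t : ℕ) : ZMod d) = j),
        algebraMap K L (u t) * A t x ^ m t with hTdef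
  have haeval_mem : ∀ x : L, Polynomial.aeval (A 0 x) g ∈ V 0 := by
    intro x
    have h0 : A 0 x ∈ V 0 := by
      have := hA_mem 0 x
      rwa [Nat.cast_zero] at this
    rw [hV0eq] at h0 ⊢
    obtain ⟨a, ha⟩ := h0
    refine ⟨Polynomial.eval a g, ?_⟩
    rw [← ha]
    exact (Polynomial.aeval_algebraMap_apply_eq_algebraMap_eval a g).symm
  have hT_mem : ∀ x j, T x j ∈ V j := by
    intro x j
    simp only [hTdef]
    apply hVadd
    · split_ifs with h0
      · subst h0
        exact haeval_mem x
      · exact hVzero j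
    · refine Finset.sum_induction _ (fun y => y ∈ V j) (hVadd j) (hVzero j) ?_
      intro t ht
      rw [Finset.mem_filter] at ht
      obtain ⟨htIcc, htj⟩ := ht
      rw [← htj]
      have h1 : A t x ∈ V (t : ZMod d) := hA_mem t x
      have h2 := hVpow _ _ h1 (m t)
      have h3 : ((m t : ZMod d) * (t : ZMod d)) = ((t * m t : ℕ) : ZMod d) := by
        push_cast
        ring
      rw [h3] at h2
      exact hVscal _ _ _ h2
  have hT_sum : ∀ x, ∑ j : ZMod d, T x j = f x := by
    intro x
    rw [hf]
    simp only [hTdef]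
    rw [Finset.sum_add_distrib]
    congr 1
    · simp
    · exact Finset.sum_fiberwise_of_maps_to (fun t _ => Finset.mem_univ _) _
  have hcoordf : ∀ x x', f x = f x' → ∀ j, T x j = T x' j := by
    intro x x' hxx' j
    exact huniq _ _ (hT_mem x) (hT_mem x') (by rw [hT_sum, hT_sum, hxx']) j
  have hcomp : Surjective f → ∀ (j : ZMod d) (v : L), v ∈ V j → ∃ x, T x j = v := by
    intro hsurj j v hv
    obtain ⟨x, hx⟩ := hsurj v
    refine ⟨x, ?_⟩
    have hdec : ∑ j' : ZMod d, (if j' = j then v else 0) = f x := by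
      rw [hx]
      simp
    have h1 := huniq (T x) (fun j' => if j' = j then v else 0) (hT_mem x)
      (fun j' => by
        show (if j' = j then v else 0) ∈ V j'
        by_cases h : j' = j
        · rw [if_pos h]; exact h ▸ hv
        · rw [if_neg h]; exact hVzero j')
      (by rw [hT_sum]; exact hdec.symm) j
    simpa using h1
  -- fibers of the residue map, given injectivity
  have hclassne : ∀ (_ : Injective r) t, 1 ≤ t → t ≤ d - 1 → ((t * m t : ℕ) : ZMod d) ≠ 0 := by
    intro hrinj t h1 h2 hc
    have h3 : r ⟨t, by omega⟩ = r ⟨0, by omega⟩ := by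
      simp only [hr]
      simpa using hc
    have h4 := hrinj h3
    have h5 : t = 0 := by simpa using h4
    omega
  have hfiber : ∀ (_ : Injective r) t, 1 ≤ t → t ≤ d - 1 →
      (Finset.Icc 1 (d - 1)).filter
          (fun t' => ((t' * m t' : ℕ) : ZMod d) = ((t * m t : ℕ) : ZMod d)) = {t} := by
    intro hrinj t h1 h2
    ext t'
    rw [Finset.mem_filter, Finset.mem_singleton, Finset.mem_Icc]
    constructor
    · rintro ⟨⟨ha, hb⟩, heq⟩
      have h3 : r ⟨t', by omega⟩ = r ⟨t, by omega⟩ := by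
        simp only [hr]
        simpa using heq
      have h4 := hrinj h3
      simpa using h4
    · rintro rfl
      exact ⟨⟨h1, h2⟩, rfl⟩
  have hTt : ∀ (_ : Injective r), ∀ x t, 1 ≤ t → t ≤ d - 1 →
      T x ((t * m t : ℕ) : ZMod d) = algebraMap K L (u t) * A t x ^ m t := by
    intro hrinj x t h1 h2
    simp only [hTdef]
    rw [if_neg (hclassne hrinj t h1 h2), hfiber hrinj t h1 h2, Finset.sum_singleton, zero_add]
  have hT0 : ∀ (_ : Injective r), ∀ x, T x 0 = Polynomial.aeval (A 0 x) g := by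
    intro hrinj x
    simp only [hTdef]
    have hempty : (Finset.Icc 1 (d - 1)).filter
        (fun t' => ((t' * m t' : ℕ) : ZMod d) = (0 : ZMod d)) = ∅ := by
      rw [Finset.filter_eq_empty_iff]
      intro t ht
      rw [Finset.mem_Icc] at ht
      exact hclassne hrinj t ht.1 ht.2
    rw [hempty, Finset.sum_empty]
    simp
  constructor
  · -- forward direction
    intro hbij
    have hsurjf := hbij.2
    have hrsurj : Surjective r := by
      intro j
      by_contra hj
      push_neg at hj
      obtain ⟨e, heV, he0⟩ := hVex j
      obtain ⟨x, hx⟩ := hcomp hsurjf j e heV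
      have hj0 : j ≠ 0 := by
        intro h0
        refine hj ⟨0, by omega⟩ ?_
        simp [hr, h0]
      have hempty : (Finset.Icc 1 (d - 1)).filter
          (fun t => ((t * m t : ℕ) : ZMod d) = j) = ∅ := by
        rw [Finset.filter_eq_empty_iff]
        intro t ht
        rw [Finset.mem_Icc] at ht
        intro hc
        refine hj ⟨t, by omega⟩ ?_
        simp only [hr]
        simpa using hc
      simp only [hTdef, hempty, Finset.sum_empty, if_neg hj0, add_zero] at hx
      exact he0 hx.symm
    have hrbij : Bijective r := by
      rw [Fintype.bijective_iff_surjective_and_card]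
      exact ⟨hrsurj, by simp [ZMod.card]⟩
    have hune : ∀ t, 1 ≤ t → t ≤ d - 1 → u t ≠ 0 := by
      intro t h1 h2 hu0
      obtain ⟨e, heV, he0⟩ := hVex ((t * m t : ℕ) : ZMod d)
      obtain ⟨x, hx⟩ := hcomp hsurjf _ e heV
      rw [hTt hrbij.1 x t h1 h2, hu0, map_zero, zero_mul] at hx
      exact he0 hx.symm
    have hcop : ∀ t, 1 ≤ t → t ≤ d - 1 → Nat.Coprime (m t) (q - 1) := by
      intro t h1 h2
      apply aux_pow_surj_coprime
      intro b
      obtain ⟨e, heV, he0⟩ := hVex ((t : ℕ) : ZMod d)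
      have hem : e ^ m t ∈ V ((t * m t : ℕ) : ZMod d) := by
        have h3 := hVpow _ _ heV (m t)
        have h4 : ((m t : ZMod d) * ((t : ℕ) : ZMod d)) = ((t * m t : ℕ) : ZMod d) := by
          push_cast
          ring
        rwa [h4] at h3
      have hv : algebraMap K L (u t * b) * e ^ m t ∈ V ((t * m t : ℕ) : ZMod d) :=
        hVscal _ _ _ hem
      obtain ⟨x, hx⟩ := hcomp hsurjf _ _ hv
      rw [hTt hrbij.1 x t h1 h2] at hx
      obtain ⟨a, ha⟩ := hline _ e heV he0 (A t x) (hA_mem t x)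
      rw [ha, mul_pow, ← map_pow, ← mul_assoc, ← map_mul] at hx
      have hene : e ^ m t ≠ 0 := pow_ne_zero _ he0
      have h5 := mul_right_cancel₀ hene hx
      have hab : u t * a ^ m t = u t * b := hainj h5
      exact ⟨a, mul_left_cancel₀ (hune t h1 h2) hab⟩
    have hgsurj : Surjective (fun c : K => Polynomial.eval c g) := by
      intro b
      obtain ⟨x, hx⟩ := hcomp hsurjf 0 _ (hV0 b)
      rw [hT0 hrbij.1 x] at hx
      have h0 : A 0 x ∈ V 0 := by
        have := hA_mem 0 x
        rwa [Nat.cast_zero] at this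
      rw [hV0eq] at h0
      obtain ⟨a, ha⟩ := h0
      rw [← ha, Polynomial.aeval_algebraMap_apply_eq_algebraMap_eval] at hx
      exact ⟨a, hainj hx⟩
    refine ⟨hrbij, hune, ?_, Finite.surjective_iff_bijective.mp hgsurj⟩
    exact Nat.coprime_prod_left_iff.mpr
      (fun t ht => hcop t (Finset.mem_Icc.mp ht).1 (Finset.mem_Icc.mp ht).2)
  · -- reverse direction
    rintro ⟨hrbij, hu, hgcd, hgbij⟩
    have hcop : ∀ t, 1 ≤ t → t ≤ d - 1 → Nat.Coprime (m t) (q - 1) := by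
      intro t h1 h2
      exact Nat.coprime_prod_left_iff.mp hgcd t (Finset.mem_Icc.mpr ⟨h1, h2⟩)
    refine Finite.injective_iff_bijective.mp ?_
    intro x x' hxx'
    have hT := hcoordf x x' hxx'
    have hAeq : ∀ i ∈ range d, A i x = A i x' := by
      intro i hi
      rw [Finset.mem_range] at hi
      rcases Nat.eq_zero_or_pos i with rfl | hi1
      · have h0 := hT 0
        rw [hT0 hrbij.1 x, hT0 hrbij.1 x'] at h0
        have hx0 : A 0 x ∈ V 0 := by
          have := hA_mem 0 x
          rwa [Nat.cast_zero] at this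
        have hx0' : A 0 x' ∈ V 0 := by
          have := hA_mem 0 x'
          rwa [Nat.cast_zero] at this
        rw [hV0eq] at hx0 hx0'
        obtain ⟨a, ha⟩ := hx0
        obtain ⟨a', ha'⟩ := hx0'
        rw [← ha, ← ha', Polynomial.aeval_algebraMap_apply_eq_algebraMap_eval,
          Polynomial.aeval_algebraMap_apply_eq_algebraMap_eval] at h0
        have h1 := hgbij.1 (hainj h0)
        rw [← ha, ← ha', h1]
      · have h2 : i ≤ d - 1 := by omega
        have ht := hT ((i * m i : ℕ) : ZMod d)
        rw [hTt hrbij.1 x i hi1 h2, hTt hrbij.1 x' i hi1 h2] at ht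
        have hune := hu i hi1 h2
        have halgu : algebraMap K L (u i) ≠ 0 := fun hz =>
          hune (hainj (by rw [hz, map_zero]))
        have hpow := mul_left_cancel₀ halgu ht
        obtain ⟨e, heV, he0⟩ := hVex ((i : ℕ) : ZMod d)
        obtain ⟨a, ha⟩ := hline _ e heV he0 (A i x) (hA_mem i x)
        obtain ⟨a', ha'⟩ := hline _ e heV he0 (A i x') (hA_mem i x')
        rw [ha, ha', mul_pow, mul_pow] at hpow
        have hene : e ^ m i ≠ 0 := pow_ne_zero _ he0
        have h3 := mul_right_cancel₀ hene hpow
        rw [← map_pow, ← map_pow] at h3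
        have h4 : a ^ m i = a' ^ m i := hainj h3
        have h5 : a = a' := aux_pow_inj K (m i) (hm i hi1 h2) (hcop i hi1 h2) h4
        rw [ha, ha', h5]
    have hdx : (d : L) * x = (d : L) * x' := by
      rw [← hrecover x, ← hrecover x']
      exact Finset.sum_congr rfl (fun i hi => by rw [hAeq i hi])
    exact mul_left_cancel₀ hdL hdx
end

section
/- In the setting of Theorem 4.1, suppose f(x) = g(A_0(x)) + Σ_{t=1}^{d−1} u_t A_t(x)^{m_t} is a permutation of F_{q^d}, and let r_i be positive integers with m_i r_i ≡ 1 (mod d(q−1)) and g⁻¹ the compositional inverse of g on F_q. Then f⁻¹(x) = (1/d)·( g⁻¹(A_0(x)/d) + Σ_{i=1}^{d−1} ω^i (d u_i ω^{−j})^{−r_i} A_j(x)^{r_i} ), where for each i, j is the unique index in {1,…,d−1} with j ≡ i·m_i (mod d). -/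
/-!
Raising to the `q`-th power shifts the summands of `A_i(x)` cyclically, so
`A_i(x)^q = ω^i A_i(x)`, and orthogonality of the characters `i ↦ ω^{ij}` gives
`x = (1/d) Σ_i ω^i A_i(x)`. Conversely `A_j` annihilates an eigenvector `z^q = ω^k z` of the
Frobenius unless `j ≡ k (mod d)`, in which case it multiplies it by `d ω^{-j}`.

Every summand of `f(x)` is such an eigenvector: `g(A_0(x))` lies in `F_q`, and
`u_t A_t(x)^{m_t}` has eigenvalue `ω^{t m_t}`. As `{0} ∪ {t m_t}` is a complete residue system,
`A_0(f(x)) = d g(A_0(x))` and `A_j(f(x)) = d u_i ω^{-j} A_i(x)^{m_i}` for `j ≡ i m_i`.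
Applying `g⁻¹` and raising to `r_i` (note `A_i(x)^{d(q-1)} = 1` unless `A_i(x) = 0`) recovers
every `A_i(x)`, hence `x`. On the finite set `F_{q^d}` this left inverse is also a right inverse.
-/
open Polynomial Finset FiniteField

open Classical in
theorem geom_sum_eq_ite_of_pow_eq_one {R : Type*} [DivisionRing R] {ζ : R} {d : ℕ}
    (hζ : ζ ^ d = 1) : ∑ t ∈ range d, ζ ^ t = if ζ = 1 then (d : R) else 0 := by
  split_ifs with h
  · simp [h]
  · rw [geom_sum_eq h, hζ, sub_self, zero_div]

theorem pow_eq_pow_iff_natCast_eq {M : Type*} [Monoid M] {ω : M} {d : ℕ} (hω : orderOf ω = d)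
    (hd : d ≠ 0) (a b : ℕ) : ω ^ a = ω ^ b ↔ (a : ZMod d) = b := by
  rw [(orderOf_pos_iff.mp (hω ▸ Nat.pos_of_ne_zero hd)).pow_eq_pow_iff_modEq, hω,
    ZMod.natCast_eq_natCast_iff]

theorem range_eq_insert_zero_Icc {d : ℕ} (hd : d ≠ 0) : range d = insert 0 (Icc 1 (d - 1)) := by
  ext t
  simp only [mem_range, mem_insert, mem_Icc]
  omega

section

variable {K L : Type*} [Field K] [Fintype K] [Field L] [Algebra K L]

local notation "q" => Fintype.card K

theorem algebraMap_pow_card (c : K) : algebraMap K L c ^ q = algebraMap K L c := by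
  rw [← map_pow, pow_card]

theorem frobeniusAlgHom_pow_apply (n : ℕ) (x : L) :
    (frobeniusAlgHom K L ^ n) x = x ^ q ^ n := by
  rw [AlgHom.coe_pow, coe_frobeniusAlgHom, pow_iterate]

theorem pow_card_pow_of_pow_card_eq {z : L} {c : K} (hz : z ^ q = algebraMap K L c * z)
    (s : ℕ) : z ^ q ^ s = algebraMap K L (c ^ s) * z := by
  induction s with
  | zero => simp
  | succ s ih =>
    rw [pow_succ, pow_mul, ih, mul_pow, hz, algebraMap_pow_card, pow_succ, map_mul]
    ring

theorem exists_algebraMap_eq_of_pow_card_eq_self {z : L} (hz : z ^ q = z) :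
    ∃ c : K, algebraMap K L c = z := by
  have hsplit : Splits (X ^ q - X : K[X]) := by
    rw [splits_iff_card_roots, roots_X_pow_card_sub_X, ← Finset.card_def, Finset.card_univ,
      X_pow_card_sub_X_natDegree_eq _ Fintype.one_lt_card]
  have := roots_X_pow_card_sub_X K ▸ hsplit.roots_map (algebraMap K L) ▸ Multiset.mem_map (b := z)
  simpa [sub_eq_zero, hz, X_pow_card_sub_X_ne_zero L Fintype.one_lt_card] using this

theorem pow_eq_self_of_pow_card_eq {z : L} {ζ : K} {d e : ℕ} (hζ : ζ ^ d = 1)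
    (hz : z ^ q = algebraMap K L ζ * z) (he : e ≡ 1 [MOD d * (q - 1)]) (he0 : e ≠ 0) :
    z ^ e = z := by
  rcases eq_or_ne z 0 with rfl | hz0
  · exact zero_pow he0
  have hzq : z ^ (q - 1) = algebraMap K L ζ := by
    apply mul_right_cancel₀ hz0
    rw [← pow_succ, Nat.sub_add_cancel Fintype.card_pos, hz]
  obtain ⟨k, hk⟩ : d * (q - 1) ∣ e - 1 := (Nat.modEq_iff_dvd' (by omega)).mp he.symm
  have he' : e = (q - 1) * d * k + 1 := by rw [mul_comm (q - 1), ← hk]; omega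
  rw [he', pow_succ, pow_mul, pow_mul, hzq, ← map_pow, hζ, map_one, one_pow, one_mul]

variable (L) in
/-- The paper's `A_i`. -/
noncomputable def twistedTrace (ω : K) (d i : ℕ) : L →ₗ[K] L :=
  ∑ t ∈ range d, ω ^ (i * t) • (frobeniusAlgHom K L ^ (d - 1 - t)).toLinearMap

theorem twistedTrace_apply (ω : K) (d i : ℕ) (x : L) :
    twistedTrace L ω d i x =
      ∑ t ∈ range d, algebraMap K L (ω ^ (i * t)) * x ^ q ^ (d - 1 - t) := by
  rw [twistedTrace, LinearMap.sum_apply]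
  simp_rw [LinearMap.smul_apply, AlgHom.toLinearMap_apply, frobeniusAlgHom_pow_apply,
    Algebra.smul_def]

theorem twistedTrace_pow_card {ω : K} {d : ℕ} (hω : ω ^ d = 1) (hL : ∀ x : L, x ^ q ^ d = x)
    (i : ℕ) (x : L) :
    twistedTrace L ω d i x ^ q = algebraMap K L (ω ^ i) * twistedTrace L ω d i x := by
  rcases d with _ | n
  · simp [twistedTrace_apply, zero_pow Fintype.card_ne_zero]
  have hfrob : ∀ y : L, y ^ q = frobeniusAlgHom K L y := fun _ => rfl
  rw [hfrob, twistedTrace_apply, map_sum, mul_sum, sum_range_succ', sum_range_succ]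
  congr 1
  · refine sum_congr rfl fun t ht => ?_
    have : n + 1 - 1 - (t + 1) + 1 = n + 1 - 1 - t := by have := mem_range.mp ht; omega
    rw [map_mul, AlgHom.commutes, ← hfrob, ← pow_mul, ← pow_succ, this, ← mul_assoc, ← map_mul,
      ← pow_add, mul_add_one, add_comm (i * t)]
  · rw [map_mul, AlgHom.commutes, ← hfrob, ← pow_mul, ← pow_succ, ← mul_assoc, ← map_mul,
      ← pow_add, show i + i * n = (n + 1) * i by ring, pow_mul ω (n + 1), hω, one_pow]
    simp [hL]

open Classical in
theorem twistedTrace_of_pow_card_eq {ω : K} {d : ℕ} (hω : ω ^ d = 1) {z : L} {k : ℕ}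
    (hz : z ^ q = algebraMap K L (ω ^ k) * z) (j : ℕ) :
    twistedTrace L ω d j z =
      if ω ^ j = ω ^ k then algebraMap K L (d * (ω ^ j)⁻¹) * z else 0 := by
  rcases eq_or_ne d 0 with rfl | hd
  · simp [twistedTrace_apply]
  have hω0 : ω ≠ 0 := by rintro rfl; simp [zero_pow hd] at hω
  have hk0 : ω ^ k ≠ 0 := pow_ne_zero k hω0
  have hterm : ∀ t ∈ range d, algebraMap K L (ω ^ (j * t)) * z ^ q ^ (d - 1 - t) =
      algebraMap K L ((ω ^ k)⁻¹ * (ω ^ j * (ω ^ k)⁻¹) ^ t) * z := by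
    intro t ht
    have hpow : (ω ^ k) ^ (d - 1 - t) = (ω ^ k)⁻¹ ^ (t + 1) := by
      rw [inv_pow]
      apply eq_inv_of_mul_eq_one_left
      have : d - 1 - t + (t + 1) = d := by have := mem_range.mp ht; omega
      rw [← pow_add, this, pow_right_comm, hω, one_pow]
    rw [pow_card_pow_of_pow_card_eq hz, ← mul_assoc, ← map_mul, hpow, mul_pow, ← pow_mul,
      pow_succ', mul_left_comm]
  have hζ : (ω ^ j * (ω ^ k)⁻¹) ^ d = 1 := by
    rw [mul_pow, inv_pow, pow_right_comm, pow_right_comm ω k, hω, one_pow, one_pow, inv_one,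
      mul_one]
  rw [twistedTrace_apply, sum_congr rfl hterm, ← sum_mul, ← map_sum, ← mul_sum,
    geom_sum_eq_ite_of_pow_eq_one hζ, mul_inv_eq_one₀ hk0]
  split_ifs with h
  · rw [h, mul_comm (ω ^ k)⁻¹]
  · simp

theorem sum_algebraMap_pow_mul_twistedTrace {ω : K} {d : ℕ} (hω : IsPrimitiveRoot ω d) (x : L) :
    ∑ i ∈ range d, algebraMap K L (ω ^ i) * twistedTrace L ω d i x = d * x := by
  rcases eq_or_ne d 0 with rfl | hd
  · simp
  have hcol : ∀ t ∈ range d, ∑ i ∈ range d,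
      algebraMap K L (ω ^ i) * (algebraMap K L (ω ^ (i * t)) * x ^ q ^ (d - 1 - t)) =
        if t = d - 1 then (d : L) * x else 0 := by
    intro t ht
    have hpow : (ω ^ (t + 1)) ^ d = 1 := by rw [pow_right_comm, hω.pow_eq_one, one_pow]
    have hone : ω ^ (t + 1) = 1 ↔ t = d - 1 := by
      have := mem_range.mp ht
      rw [hω.pow_eq_one_iff_dvd]
      refine ⟨fun h => ?_, fun h => ?_⟩
      · have := Nat.le_of_dvd t.succ_pos h
        omega
      · rw [h, Nat.sub_add_cancel (by omega)]
    simp_rw [← mul_assoc, ← map_mul, ← pow_add, show ∀ i, i + i * t = (t + 1) * i by intro; ring,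
      pow_mul, ← sum_mul, ← map_sum, geom_sum_eq_ite_of_pow_eq_one hpow, hone]
    split_ifs with h <;> simp [h]
  simp_rw [twistedTrace_apply, mul_sum]
  rw [sum_comm, sum_congr rfl hcol, sum_ite_eq' (range d) (d - 1), if_pos (by simp; omega)]

theorem twistedTrace_sum_of_pow_card_eq {ω : K} {d : ℕ} (hω : ω ^ d = 1) {s : Finset ℕ}
    {k : ℕ → ℕ} (hk : Set.InjOn (fun t => ω ^ k t) s) {y : ℕ → L}
    (hy : ∀ t ∈ s, y t ^ q = algebraMap K L (ω ^ k t) * y t) {i j : ℕ} (hi : i ∈ s)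
    (hj : ω ^ j = ω ^ k i) :
    twistedTrace L ω d j (∑ t ∈ s, y t) = algebraMap K L (d * (ω ^ j)⁻¹) * y i := by
  rw [map_sum, sum_eq_single_of_mem i hi fun t ht hti => ?_,
    twistedTrace_of_pow_card_eq hω (hy i hi), if_pos hj]
  rw [twistedTrace_of_pow_card_eq hω (hy t ht), if_neg]
  exact fun h => hti (hk ht hi (h.symm.trans hj))

theorem exists_algebraMap_eq_twistedTrace_zero {ω : K} {d : ℕ} (hω : ω ^ d = 1)
    (hL : ∀ x : L, x ^ q ^ d = x) (x : L) : ∃ c : K, algebraMap K L c = twistedTrace L ω d 0 x :=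
  exists_algebraMap_eq_of_pow_card_eq_self <| by
    rw [twistedTrace_pow_card hω hL, pow_zero, map_one, one_mul]

/-- The map `f` of Theorem 4.1. -/
noncomputable def ppMap (ω : K) (d : ℕ) (g : K[X]) (u : ℕ → K) (m : ℕ → ℕ) (x : L) : L :=
  aeval (twistedTrace L ω d 0 x) g +
    ∑ t ∈ Icc 1 (d - 1), algebraMap K L (u t) * twistedTrace L ω d t x ^ m t

/-- The claimed inverse `f⁻¹` of Theorem 4.1. -/
noncomputable def ppInverse (ω : K) (d : ℕ) (u : ℕ → K) (ginv : K[X]) (r j : ℕ → ℕ) (x : L) : L :=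
  (d : L)⁻¹ * (aeval (twistedTrace L ω d 0 x / d) ginv +
    ∑ i ∈ Icc 1 (d - 1), algebraMap K L (ω ^ i) *
      (algebraMap K L (d * u i * (ω ^ j i)⁻¹))⁻¹ ^ r i * twistedTrace L ω d (j i) x ^ r i)

section ppMap

variable {ω : K} {d : ℕ} {g : K[X]} {u : ℕ → K} {m : ℕ → ℕ}

noncomputable def ppSummand (ω : K) (d : ℕ) (g : K[X]) (u : ℕ → K) (m : ℕ → ℕ) (x : L) (t : ℕ) :
    L :=
  if t = 0 then aeval (twistedTrace L ω d 0 x) g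
  else algebraMap K L (u t) * twistedTrace L ω d t x ^ m t

theorem ppMap_eq_sum (hd : d ≠ 0) (x : L) :
    ppMap ω d g u m x = ∑ t ∈ range d, ppSummand ω d g u m x t := by
  rw [ppMap, range_eq_insert_zero_Icc hd, sum_insert (by simp), ppSummand, if_pos rfl]
  refine congrArg _ (sum_congr rfl fun t ht => ?_)
  rw [ppSummand, if_neg (by simp at ht; omega)]

theorem ppSummand_pow_card (hω : ω ^ d = 1) (hL : ∀ x : L, x ^ q ^ d = x) (x : L) (t : ℕ) :
    ppSummand ω d g u m x t ^ q = algebraMap K L (ω ^ (t * m t)) * ppSummand ω d g u m x t := by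
  rcases eq_or_ne t 0 with rfl | ht
  · obtain ⟨c, hc⟩ := exists_algebraMap_eq_twistedTrace_zero hω hL x
    rw [ppSummand, if_pos rfl, ← hc, aeval_algebraMap_apply_eq_algebraMap_eval,
      algebraMap_pow_card, zero_mul, pow_zero, map_one, one_mul]
  · rw [ppSummand, if_neg ht, mul_pow, algebraMap_pow_card, ← pow_mul, mul_comm _ q, pow_mul,
      twistedTrace_pow_card hω hL, mul_pow, ← map_pow, ← pow_mul]
    ring

theorem twistedTrace_ppMap (hω : ω ^ d = 1) (hL : ∀ x : L, x ^ q ^ d = x)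
    (hres : Set.InjOn (fun t => ω ^ (t * m t)) (range d)) (x : L) {i j : ℕ} (hi : i < d)
    (hj : ω ^ j = ω ^ (i * m i)) :
    twistedTrace L ω d j (ppMap ω d g u m x) =
      algebraMap K L (d * (ω ^ j)⁻¹) * ppSummand ω d g u m x i := by
  rw [ppMap_eq_sum (Nat.ne_zero_of_lt hi)]
  exact twistedTrace_sum_of_pow_card_eq hω hres (fun t _ => ppSummand_pow_card hω hL x t)
    (mem_range.mpr hi) hj

theorem twistedTrace_zero_ppMap (hω : ω ^ d = 1) (hd : d ≠ 0) (hL : ∀ x : L, x ^ q ^ d = x)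
    (hres : Set.InjOn (fun t => ω ^ (t * m t)) (range d)) (x : L) :
    twistedTrace L ω d 0 (ppMap ω d g u m x) = d * aeval (twistedTrace L ω d 0 x) g := by
  rw [twistedTrace_ppMap hω hL hres x (Nat.pos_of_ne_zero hd) (by simp), ppSummand, if_pos rfl,
    pow_zero, inv_one, mul_one, map_natCast]

theorem twistedTrace_ppMap_of_mem_Icc (hω : ω ^ d = 1) (hL : ∀ x : L, x ^ q ^ d = x)
    (hres : Set.InjOn (fun t => ω ^ (t * m t)) (range d)) (x : L) {i j : ℕ}
    (hi : i ∈ Icc 1 (d - 1)) (hj : ω ^ j = ω ^ (i * m i)) :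
    twistedTrace L ω d j (ppMap ω d g u m x) =
      algebraMap K L (d * u i * (ω ^ j)⁻¹) * twistedTrace L ω d i x ^ m i := by
  obtain ⟨hi1, hid⟩ := mem_Icc.mp hi
  rw [twistedTrace_ppMap hω hL hres x (by omega) hj, ppSummand, if_neg (by omega), map_mul,
    map_mul, map_mul]
  ring

theorem ppInverse_ppMap (hω : IsPrimitiveRoot ω d) (hd : d ≠ 0) (hL : ∀ x : L, x ^ q ^ d = x)
    (hres : Set.InjOn (fun t => ω ^ (t * m t)) (range d)) {r j : ℕ → ℕ} {ginv : K[X]}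
    (hginv : ∀ c : K, ginv.eval (g.eval c) = c) (hu : ∀ i ∈ Icc 1 (d - 1), u i ≠ 0)
    (hm : ∀ i ∈ Icc 1 (d - 1), 0 < m i)
    (hr : ∀ i ∈ Icc 1 (d - 1), 0 < r i ∧ m i * r i ≡ 1 [MOD d * (q - 1)])
    (hj : ∀ i ∈ Icc 1 (d - 1), ω ^ j i = ω ^ (i * m i)) :
    Function.LeftInverse (ppInverse ω d u ginv r j) (ppMap ω d g u m : L → L) := by
  intro x
  have : NeZero d := ⟨hd⟩
  have hdL : (d : L) ≠ 0 := by
    rw [← map_natCast (algebraMap K L), _root_.map_ne_zero]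
    exact hω.neZero'.out
  obtain ⟨c, hc⟩ := exists_algebraMap_eq_twistedTrace_zero hω.pow_eq_one hL x
  have hA0 : twistedTrace L ω d 0 (ppMap ω d g u m x) / d = algebraMap K L (g.eval c) := by
    rw [twistedTrace_zero_ppMap hω.pow_eq_one hd hL hres, mul_div_cancel_left₀ _ hdL, ← hc,
      aeval_algebraMap_apply_eq_algebraMap_eval]
  have hAj : ∀ i ∈ Icc 1 (d - 1), algebraMap K L (ω ^ i) *
      (algebraMap K L (d * u i * (ω ^ j i)⁻¹))⁻¹ ^ r i *
        twistedTrace L ω d (j i) (ppMap ω d g u m x) ^ r i =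
      algebraMap K L (ω ^ i) * twistedTrace L ω d i x := by
    intro i hi
    have ha : algebraMap K L (d * u i * (ω ^ j i)⁻¹) ≠ 0 := by
      simp [hdL, hu i hi, hω.ne_zero hd]
    rw [twistedTrace_ppMap_of_mem_Icc hω.pow_eq_one hL hres x hi (hj i hi), mul_pow,
      ← mul_assoc, mul_assoc _ (_⁻¹ ^ r i), ← mul_pow, inv_mul_cancel₀ ha, one_pow, mul_one,
      ← pow_mul, pow_eq_self_of_pow_card_eq (by rw [pow_right_comm, hω.pow_eq_one, one_pow])
        (twistedTrace_pow_card hω.pow_eq_one hL i x) (hr i hi).2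
        (Nat.mul_ne_zero (hm i hi).ne' (hr i hi).1.ne')]
  have hsum := sum_algebraMap_pow_mul_twistedTrace hω x
  rw [range_eq_insert_zero_Icc hd, sum_insert (by simp), pow_zero, map_one, one_mul] at hsum
  rw [ppInverse, hA0, aeval_algebraMap_apply_eq_algebraMap_eval, hginv, hc, sum_congr rfl hAj,
    hsum, inv_mul_cancel_left₀ hdL]

end ppMap

end

theorem pp_inverse_formula_general (K L : Type) [Field K] [Fintype K] [Field L] [Fintype L] [Algebra K L]
    (d : ℕ) (hd : 1 < d) (hL : Fintype.card L = Fintype.card K ^ d)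
    (ω : K) (hω : orderOf ω = d)
    (A : ℕ → L → L)
    (hA : ∀ i x, A i x =
      ∑ t ∈ Finset.range d, algebraMap K L (ω ^ (i * t)) * x ^ Fintype.card K ^ (d - 1 - t))
    (m : ℕ → ℕ) (hm : ∀ i, 1 ≤ i → i ≤ d - 1 → 0 < m i)
    (u : ℕ → K) (g : Polynomial K)
    (f : L → L)
    (hf : ∀ x : L, f x =
      Polynomial.aeval (A 0 x) g +
        ∑ t ∈ Finset.Icc 1 (d - 1), algebraMap K L (u t) * A t x ^ m t)
    (hcrs : Function.Bijective (fun i : Fin d => (((i : ℕ) * m (i : ℕ) : ℕ) : ZMod d)))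
    (hu : ∀ i, 1 ≤ i → i ≤ d - 1 → u i ≠ 0)
    (r : ℕ → ℕ)
    (hr : ∀ i, 1 ≤ i → i ≤ d - 1 →
      0 < r i ∧ m i * r i % (d * (Fintype.card K - 1)) = 1 % (d * (Fintype.card K - 1)))
    (j : ℕ → ℕ)
    (hj : ∀ i, 1 ≤ i → i ≤ d - 1 →
      1 ≤ j i ∧ j i ≤ d - 1 ∧ ((j i : ZMod d) = ((i * m i : ℕ) : ZMod d)))
    (ginv : Polynomial K)
    (hginv : ∀ c : K, Polynomial.eval (Polynomial.eval c g) ginv = c)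
    (finv : L → L)
    (hfinvdef : ∀ x : L, finv x =
      (d : L)⁻¹ *
        (Polynomial.aeval (A 0 x / (d : L)) ginv +
          ∑ i ∈ Finset.Icc 1 (d - 1),
            algebraMap K L (ω ^ i) *
              (algebraMap K L ((d : K) * u i * (ω ^ (j i))⁻¹))⁻¹ ^ r i *
              A (j i) x ^ r i)) :
    Function.LeftInverse finv f ∧ Function.RightInverse finv f := by
  have hd0 : d ≠ 0 := by omega
  have hpow := pow_eq_pow_iff_natCast_eq hω hd0
  obtain rfl : A = fun i x => twistedTrace L ω d i x := by
    funext i x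
    rw [hA, twistedTrace_apply]
  obtain rfl : f = ppMap ω d g u m := funext hf
  obtain rfl : finv = ppInverse ω d u ginv r j := funext hfinvdef
  have hres : Set.InjOn (fun t => ω ^ (t * m t)) (range d) := fun a ha b hb hab =>
    congrArg Fin.val (hcrs.injective (a₁ := ⟨a, mem_range.mp ha⟩) (a₂ := ⟨b, mem_range.mp hb⟩)
      ((hpow _ _).mp hab))
  have hleft : Function.LeftInverse (ppInverse ω d u ginv r j) (ppMap ω d g u m : L → L) :=
    ppInverse_ppMap (hω ▸ IsPrimitiveRoot.orderOf ω) hd0 (fun x => hL ▸ FiniteField.pow_card x)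
      hres hginv (fun i hi => hu i (mem_Icc.mp hi).1 (mem_Icc.mp hi).2)
      (fun i hi => hm i (mem_Icc.mp hi).1 (mem_Icc.mp hi).2)
      (fun i hi => hr i (mem_Icc.mp hi).1 (mem_Icc.mp hi).2)
      (fun i hi => (hpow _ _).mpr (hj i (mem_Icc.mp hi).1 (mem_Icc.mp hi).2).2.2)
  exact ⟨hleft, hleft.rightInverse_of_surjective (Finite.surjective_of_injective hleft.injective)⟩

/-- Theorem 4.1 (inverse formula): under the permutation conditions,
`f⁻¹(x) = (1/d)·( g⁻¹(A_0(x)/d) + Σ_{i=1}^{d-1} ω^i (d u_i ω^{-j})^{-r_i} A_j(x)^{r_i} )`,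
where `j ≡ i·m_i (mod d)`, `1 ≤ j ≤ d-1`. -/
theorem pp_inverse_formula (K L : Type) [Field K] [Fintype K] [Field L] [Fintype L] [Algebra K L]
    (d : ℕ) (hd : 1 < d) (hL : Fintype.card L = Fintype.card K ^ d)
    (hq : Fintype.card K % d = 1)
    (ω : K) (hω : orderOf ω = d)
    (A : ℕ → L → L)
    (hA : ∀ i x, A i x =
      ∑ t ∈ Finset.range d, algebraMap K L (ω ^ (i * t)) * x ^ Fintype.card K ^ (d - 1 - t))
    (m : ℕ → ℕ) (hm : ∀ i, 1 ≤ i → i ≤ d - 1 → 0 < m i)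
    (u : ℕ → K) (g : Polynomial K)
    (f : L → L)
    (hf : ∀ x : L, f x =
      Polynomial.aeval (A 0 x) g +
        ∑ t ∈ Finset.Icc 1 (d - 1), algebraMap K L (u t) * A t x ^ m t)
    (hcrs : Function.Bijective (fun i : Fin d => (((i : ℕ) * m (i : ℕ) : ℕ) : ZMod d)))
    (hu : ∀ i, 1 ≤ i → i ≤ d - 1 → u i ≠ 0)
    (hgcd : Nat.gcd (∏ i ∈ Finset.Icc 1 (d - 1), m i) (Fintype.card K - 1) = 1)
    (hgbij : Function.Bijective (fun c : K => Polynomial.eval c g))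
    (hfbij : Function.Bijective f)
    (r : ℕ → ℕ)
    (hr : ∀ i, 1 ≤ i → i ≤ d - 1 →
      0 < r i ∧ m i * r i % (d * (Fintype.card K - 1)) = 1 % (d * (Fintype.card K - 1)))
    (j : ℕ → ℕ)
    (hj : ∀ i, 1 ≤ i → i ≤ d - 1 →
      1 ≤ j i ∧ j i ≤ d - 1 ∧ ((j i : ZMod d) = ((i * m i : ℕ) : ZMod d)))
    (ginv : Polynomial K)
    (hginv : ∀ c : K, Polynomial.eval (Polynomial.eval c g) ginv = c)
    (finv : L → L)
    (hfinvdef : ∀ x : L, finv x =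
      (d : L)⁻¹ *
        (Polynomial.aeval (A 0 x / (d : L)) ginv +
          ∑ i ∈ Finset.Icc 1 (d - 1),
            algebraMap K L (ω ^ i) *
              (algebraMap K L ((d : K) * u i * (ω ^ (j i))⁻¹))⁻¹ ^ r i *
              A (j i) x ^ r i)) :
    Function.LeftInverse finv f ∧ Function.RightInverse finv f :=
  pp_inverse_formula_general K L d hd hL ω hω A hA m hm u g f hf hcrs hu r hr j hj ginv hginv finv
    hfinvdef
end

section
/- Let d > 1, q ≡ 1 (mod d), ω a primitive d-th root of unity in F_q, A_i as above, u₁, …, u_{d−1} ∈ F_q and g ∈ F_q[x]. Then f(x) = g(A_0(x)) + Σ_{i=1}^{d−1} u_i A_i(x) is a complete permutation polynomial of F_{q^d} (i.e., both f and f + x permute F_{q^d}) if and only if ∏_{i=1}^{d−1} u_i(1 + d u_i ω^{−i}) ≠ 0 and both g(x) and d·g(x) + x are permutations of F_q. -/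
open Finset Polynomial

set_option linter.unusedSectionVars false
set_option maxHeartbeats 1000000

section CPPAux
variable {K L : Type} [Field K] [Fintype K] [Field L] [Fintype L] [Algebra K L]

lemma aux_frob : ∃ F : L →+* L, ∀ x : L, F x = x ^ Fintype.card K := by
  have h := ringChar.charP K
  obtain ⟨n, hp, hcard⟩ := FiniteField.card K (ringChar K)
  haveI : CharP L (ringChar K) := charP_of_injective_algebraMap (algebraMap K L).injective _
  haveI : Fact (Nat.Prime (ringChar K)) := ⟨hp⟩
  exact ⟨iterateFrobenius L (ringChar K) n, fun x => by rw [iterateFrobenius_def, hcard]⟩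

lemma aux_pow_add (t : ℕ) (x y : L) :
    (x + y) ^ Fintype.card K ^ t = x ^ Fintype.card K ^ t + y ^ Fintype.card K ^ t := by
  obtain ⟨F, hF⟩ := aux_frob (K := K) (L := L)
  induction t with
  | zero => simp
  | succ t ih =>
      rw [pow_succ, pow_mul, pow_mul, pow_mul, ih, ← hF, ← hF, ← hF, map_add]

lemma aux_dK (d : ℕ) (hd : 1 < d) (hq : Fintype.card K % d = 1) : (d : K) ≠ 0 := by
  intro h
  have hch := ringChar.charP K
  obtain ⟨n, hp, hcard⟩ := FiniteField.card K (ringChar K)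
  have pdvd : ringChar K ∣ d := (CharP.cast_eq_zero_iff K _ d).mp h
  have h1 : d ∣ Fintype.card K - 1 := by
    have := Nat.div_add_mod (Fintype.card K) d
    exact ⟨Fintype.card K / d, by omega⟩
  have h2 : ringChar K ∣ Fintype.card K := by
    rw [hcard]; exact dvd_pow_self _ n.pos.ne'
  have h3 : ringChar K ∣ 1 := by
    have hcpos : 0 < Fintype.card K := Fintype.card_pos
    have := Nat.dvd_sub h2 (pdvd.trans h1)
    simpa [Nat.sub_sub_self (Nat.one_le_iff_ne_zero.mpr hcpos.ne')] using this
  exact hp.one_lt.ne' (Nat.dvd_one.mp h3)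

lemma aux_eck (c : K) : (algebraMap K L c) ^ Fintype.card K = algebraMap K L c := by
  rw [← map_pow, FiniteField.pow_card]

lemma aux_fix (y : L) (hy : y ^ Fintype.card K = y) : ∃ c : K, algebraMap K L c = y := by
  classical
  set q := Fintype.card K with hq
  have hq2 : 1 < q := Fintype.one_lt_card
  set p : L[X] := X ^ q - X with hp
  have hdeg : p.natDegree = q := by
    rw [hp, natDegree_sub_eq_left_of_natDegree_lt (by simpa using hq2)]
    exact natDegree_X_pow q
  have hp0 : p ≠ 0 := fun h => by simp [h] at hdeg; omega
  set s : Finset L := Finset.univ.filter fun z => z ^ q = z with hs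
  set t : Finset L := Finset.univ.image (algebraMap K L) with ht
  have hts : t ⊆ s := by
    intro z hz
    simp only [ht, mem_image, mem_univ, true_and] at hz
    obtain ⟨c, rfl⟩ := hz
    simp only [hs, mem_filter, mem_univ, true_and]
    exact aux_eck c
  have hscard : s.card ≤ q := by
    have hsub : s ⊆ p.roots.toFinset := by
      intro z hz
      simp only [hs, mem_filter] at hz
      simp only [Multiset.mem_toFinset, mem_roots', IsRoot.def]
      exact ⟨hp0, by simp [hp, hz.2, sub_eq_zero]⟩
    calc s.card ≤ p.roots.toFinset.card := Finset.card_mono hsub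
      _ ≤ Multiset.card p.roots := Multiset.toFinset_card_le _
      _ ≤ p.natDegree := Polynomial.card_roots' p
      _ = q := hdeg
  have htcard : t.card = q := by
    rw [ht, Finset.card_image_of_injective _ (algebraMap K L).injective, Finset.card_univ]
  have hst : t = s := Finset.eq_of_subset_of_card_le hts (by omega)
  have : y ∈ s := by simp [hs, hy]
  rw [← hst] at this
  simp only [ht, mem_image, mem_univ, true_and] at this
  exact this

lemma aux_nonzero (d : ℕ) (hd : 0 < d) (hL : Fintype.card L = Fintype.card K ^ d)
    (a : ℕ → L) (ha : a 0 = 1) :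
    ∃ x : L, ∑ t ∈ Finset.range d, a t * x ^ Fintype.card K ^ t ≠ 0 := by
  classical
  by_contra h
  push_neg at h
  set q := Fintype.card K with hq
  have hq2 : 1 < q := Fintype.one_lt_card
  set p : L[X] := ∑ t ∈ Finset.range d, C (a t) * X ^ (q ^ t) with hp
  have hpz : p = 0 := by
    apply Polynomial.eq_zero_of_natDegree_lt_card_of_eval_eq_zero p Function.injective_id
    · intro x
      simpa [hp, eval_finset_sum] using h x
    · rw [hL]
      calc p.natDegree ≤ q ^ (d - 1) := by
            apply Polynomial.natDegree_sum_le_of_forall_le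
            intro t ht
            refine (Polynomial.natDegree_C_mul_le _ _).trans ?_
            simp only [natDegree_X_pow]
            exact Nat.pow_le_pow_right (by omega) (by simp at ht; omega)
        _ < q ^ d := Nat.pow_lt_pow_right hq2 (by omega)
  have : p.coeff 1 = 1 := by
    rw [hp, Polynomial.finset_sum_coeff]
    rw [Finset.sum_eq_single_of_mem 0 (Finset.mem_range.mpr hd)]
    · simp [ha]
    · intro t _ ht0
      have : 1 < q ^ t := Nat.one_lt_pow ht0 hq2
      simp [coeff_X_pow, Nat.ne_of_lt this]
  rw [hpz] at this
  simp at this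

noncomputable def Sa (d : ℕ) (ω : K) (j : ℕ) (x : L) : L :=
  ∑ t ∈ Finset.range d, algebraMap K L ((ω ^ (j * t))⁻¹) * x ^ Fintype.card K ^ t

variable {d : ℕ} {ω : K}

lemma omega_ne (hd : 1 < d) (hω : orderOf ω = d) : ω ≠ 0 := by
  intro h
  have h1 : ω ^ d = 1 := hω ▸ pow_orderOf_eq_one ω
  rw [h, zero_pow (by omega)] at h1
  exact zero_ne_one h1

lemma omega_pow_d (hω : orderOf ω = d) : ω ^ d = 1 := hω ▸ pow_orderOf_eq_one ω

lemma omega_inj (hω : orderOf ω = d) {i j : ℕ} (hi : i < d) (hj : j < d)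
    (h : ω ^ i = ω ^ j) : i = j :=
  pow_injOn_Iio_orderOf (by simpa [hω] using hi) (by simpa [hω] using hj) h

lemma Sa_add (j : ℕ) (x y : L) : Sa d ω j (x + y) = Sa d ω j x + Sa d ω j y := by
  unfold Sa
  rw [← Finset.sum_add_distrib]
  exact Finset.sum_congr rfl fun t _ => by rw [aux_pow_add, mul_add]

lemma Sa_zero (j : ℕ) : Sa d ω j (0 : L) = 0 :=
  Finset.sum_eq_zero fun t _ => by
    rw [zero_pow (pow_pos Fintype.card_pos t).ne', mul_zero]

lemma Sa_frob (hd : 1 < d) (hω : orderOf ω = d)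
    (hL : Fintype.card L = Fintype.card K ^ d) (j : ℕ) (x : L) :
    (Sa d ω j x) ^ Fintype.card K = algebraMap K L (ω ^ j) * Sa d ω j x := by
  obtain ⟨F, hF⟩ := aux_frob (K := K) (L := L)
  have hω0 : ω ≠ 0 := omega_ne hd hω
  have hωd : ω ^ d = 1 := omega_pow_d hω
  unfold Sa
  rw [← hF, map_sum]
  have hterm : ∀ t, F (algebraMap K L ((ω ^ (j * t))⁻¹) * x ^ Fintype.card K ^ t)
      = algebraMap K L ((ω ^ (j * t))⁻¹) * x ^ Fintype.card K ^ (t + 1) := by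
    intro t
    rw [map_mul, hF, hF, aux_eck, ← pow_mul, ← pow_succ]
  simp_rw [hterm]
  rw [Finset.mul_sum]
  obtain ⟨m, rfl⟩ : ∃ m, d = m + 1 := ⟨d - 1, by omega⟩
  rw [Finset.sum_range_succ, Finset.sum_range_succ']
  congr 1
  · apply Finset.sum_congr rfl
    intro t _
    rw [← mul_assoc, ← map_mul]
    congr 2
    have h1 : ω ^ (j * (t + 1)) = ω ^ (j * t) * ω ^ j := by
      rw [← pow_add, show j * t + j = j * (t + 1) by ring]
    rw [h1, mul_inv, mul_comm ((ω ^ (j * t))⁻¹), ← mul_assoc,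
      mul_inv_cancel₀ (pow_ne_zero j hω0), one_mul]
  · have hx : x ^ Fintype.card K ^ (m + 1) = x := by
      rw [← hL]; exact FiniteField.pow_card x
    have h1 : ω ^ (j * m) * ω ^ j = 1 := by
      rw [← pow_add, show j * m + j = (m + 1) * j by ring, pow_mul, hωd, one_pow]
    rw [hx, inv_eq_of_mul_eq_one_right h1]
    simp

lemma Sa_eig (hd : 1 < d) (hω : orderOf ω = d) {i j : ℕ} (hi : i < d) (hj : j < d)
    (y : L) (hy : y ^ Fintype.card K = algebraMap K L (ω ^ i) * y) :
    Sa d ω j y = if i = j then algebraMap K L (d : K) * y else 0 := by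
  have hω0 : ω ≠ 0 := omega_ne hd hω
  have hωd : ω ^ d = 1 := omega_pow_d hω
  have hpows : ∀ t : ℕ, y ^ Fintype.card K ^ t = algebraMap K L (ω ^ (i * t)) * y := by
    intro t
    induction t with
    | zero => simp
    | succ t ih =>
        rw [pow_succ, pow_mul, ih, mul_pow, aux_eck, hy, ← mul_assoc, ← map_mul, ← pow_add,
          show i * t + i = i * (t + 1) by ring]
  unfold Sa
  simp_rw [hpows]
  have hcoef : ∀ t : ℕ, (ω ^ (j * t))⁻¹ * ω ^ (i * t) = (ω ^ i * (ω ^ j)⁻¹) ^ t := by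
    intro t
    rw [mul_pow, inv_pow, ← pow_mul, ← pow_mul]
    exact mul_comm _ _
  have key : ∀ t : ℕ, algebraMap K L ((ω ^ (j * t))⁻¹) * (algebraMap K L (ω ^ (i * t)) * y)
      = algebraMap K L ((ω ^ i * (ω ^ j)⁻¹) ^ t) * y := by
    intro t
    rw [← mul_assoc, ← map_mul, hcoef]
  simp_rw [key]
  rw [← Finset.sum_mul, ← map_sum]
  by_cases hij : i = j
  · subst hij
    rw [if_pos rfl]
    congr 2
    rw [mul_inv_cancel₀ (pow_ne_zero i hω0)]
    simp [mul_comm]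
  · rw [if_neg hij]
    have hζ1 : ω ^ i * (ω ^ j)⁻¹ ≠ 1 := by
      intro h
      apply hij
      apply omega_inj hω hi hj
      rwa [mul_inv_eq_one₀ (pow_ne_zero j hω0)] at h
    have hζd : (ω ^ i * (ω ^ j)⁻¹) ^ d = 1 := by
      rw [mul_pow, inv_pow, ← pow_mul, ← pow_mul, mul_comm i d, mul_comm j d,
        pow_mul, pow_mul, hωd, one_pow, one_pow, inv_one, mul_one]
    rw [geom_sum_eq hζ1, hζd, sub_self, zero_div, map_zero, zero_mul]

lemma Sa_sum (hd : 1 < d) (hω : orderOf ω = d) (x : L) :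
    ∑ j ∈ Finset.range d, Sa d ω j x = algebraMap K L (d : K) * x := by
  have hω0 : ω ≠ 0 := omega_ne hd hω
  have hωd : ω ^ d = 1 := omega_pow_d hω
  unfold Sa
  rw [Finset.sum_comm]
  have inner : ∀ t ∈ Finset.range d,
      (∑ j ∈ Finset.range d, algebraMap K L ((ω ^ (j * t))⁻¹) * x ^ Fintype.card K ^ t)
      = (if t = 0 then algebraMap K L (d : K) * x else 0) := by
    intro t ht
    rw [← Finset.sum_mul, ← map_sum]
    have hcoef : ∀ j : ℕ, (ω ^ (j * t))⁻¹ = ((ω ^ t)⁻¹) ^ j := by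
      intro j
      rw [inv_pow, ← pow_mul, mul_comm j t]
    simp_rw [hcoef]
    by_cases ht0 : t = 0
    · subst ht0
      simp [mul_comm]
    · have hζ1 : (ω ^ t)⁻¹ ≠ 1 := by
        rw [ne_eq, inv_eq_one]
        intro h
        exact ht0 (omega_inj hω (Finset.mem_range.mp ht) (by omega) (by simpa using h))
      have hζd : ((ω ^ t)⁻¹) ^ d = 1 := by
        rw [inv_pow, ← pow_mul, mul_comm t d, pow_mul, hωd, one_pow, inv_one]
      rw [if_neg ht0, geom_sum_eq hζ1, hζd, sub_self, zero_div, map_zero, zero_mul]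
  rw [Finset.sum_congr rfl inner,
    Finset.sum_eq_single_of_mem 0 (Finset.mem_range.mpr (by omega))
      (fun t _ ht0 => by rw [if_neg ht0]), if_pos rfl]

lemma Sa_A (hd : 1 < d) (hω : orderOf ω = d) (j : ℕ) (x : L) :
    (∑ t ∈ Finset.range d, algebraMap K L (ω ^ (j * t)) * x ^ Fintype.card K ^ (d - 1 - t))
      = algebraMap K L ((ω ^ j)⁻¹) * Sa d ω j x := by
  have hω0 : ω ≠ 0 := omega_ne hd hω
  have hωd : ω ^ d = 1 := omega_pow_d hω
  rw [← Finset.sum_range_reflect]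
  unfold Sa
  rw [Finset.mul_sum]
  apply Finset.sum_congr rfl
  intro t ht
  rw [Finset.mem_range] at ht
  have h2 : d - 1 - (d - 1 - t) = t := by omega
  rw [h2, ← mul_assoc, ← map_mul]
  congr 2
  have h1 : ω ^ (j * (d - 1 - t)) * (ω ^ j * ω ^ (j * t)) = 1 := by
    have hexp : j * (d - 1 - t) + (j + j * t) = d * j := by
      have h3 : (d - 1 - t) + (1 + t) = d := by omega
      calc j * (d - 1 - t) + (j + j * t) = j * ((d - 1 - t) + (1 + t)) := by ring
        _ = d * j := by rw [h3]; ring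
    rw [← pow_add, ← pow_add, hexp, pow_mul, hωd, one_pow]
  rw [eq_inv_of_mul_eq_one_left h1, mul_inv]

end CPPAux

/-- Corollary 4.1: `f(x) = g(A_0(x)) + Σ u_i A_i(x)` is a complete permutation
polynomial of `F_{q^d}` iff `∏ u_i(1 + d u_i ω^{-i}) ≠ 0` and both `g(x)` and
`d·g(x) + x` permute `F_q`. -/
theorem cpp_criterion (K L : Type) [Field K] [Fintype K] [Field L] [Fintype L] [Algebra K L]
    (d : ℕ) (hd : 1 < d) (hL : Fintype.card L = Fintype.card K ^ d)
    (hq : Fintype.card K % d = 1)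
    (ω : K) (hω : orderOf ω = d)
    (A : ℕ → L → L)
    (hA : ∀ i x, A i x =
      ∑ t ∈ Finset.range d, algebraMap K L (ω ^ (i * t)) * x ^ Fintype.card K ^ (d - 1 - t))
    (u : ℕ → K) (g : Polynomial K)
    (f : L → L)
    (hf : ∀ x : L, f x =
      Polynomial.aeval (A 0 x) g +
        ∑ i ∈ Finset.Icc 1 (d - 1), algebraMap K L (u i) * A i x) :
    (Function.Bijective f ∧ Function.Bijective (fun x : L => f x + x)) ↔
      ((∏ i ∈ Finset.Icc 1 (d - 1), u i * (1 + (d : K) * u i * (ω ^ i)⁻¹)) ≠ 0 ∧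
       Function.Bijective (fun c : K => Polynomial.eval c g) ∧
       Function.Bijective (fun c : K => (d : K) * Polynomial.eval c g + c)) := by
  classical
  have hdK : (d : K) ≠ 0 := aux_dK d hd hq
  have hω0 : ω ≠ 0 := omega_ne hd hω
  have einj := (algebraMap K L).injective
  have hene : ∀ {c : K}, c ≠ 0 → algebraMap K L c ≠ 0 := fun hc h =>
    hc (einj (by rw [h, map_zero]))
  have hedK : algebraMap K L (d : K) ≠ 0 := hene hdK
  -- the "0-th coordinate" σ
  have hfix : ∀ x : L, ∃ c : K, algebraMap K L c = Sa d ω 0 x := by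
    intro x
    apply aux_fix
    have := Sa_frob hd hω hL 0 x
    simpa using this
  choose σ hσ using hfix
  have hA' : ∀ j x, A j x = algebraMap K L ((ω ^ j)⁻¹) * Sa d ω j x := by
    intro j x; rw [hA]; exact Sa_A hd hω j x
  have hA0 : ∀ x, A 0 x = Sa d ω 0 x := by intro x; rw [hA']; simp
  -- decomposition of f
  have hfd : ∀ x, f x = algebraMap K L (Polynomial.eval (σ x) g)
      + ∑ i ∈ Finset.Icc 1 (d - 1), algebraMap K L (u i * (ω ^ i)⁻¹) * Sa d ω i x := by
    intro x
    rw [hf, hA0, ← hσ]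
    congr 1
    · rw [Polynomial.aeval_algebraMap_apply_eq_algebraMap_eval]
    · apply Finset.sum_congr rfl; intro i hi
      rw [hA', map_mul, mul_assoc]
  -- Sa of finite sums
  have hSsum : ∀ (j : ℕ) (s : Finset ℕ) (G : ℕ → L),
      Sa d ω j (∑ i ∈ s, G i) = ∑ i ∈ s, Sa d ω j (G i) := fun j s G =>
    map_sum (AddMonoidHom.mk' (Sa d ω j) (Sa_add j)) G s
  -- eigen computations
  have hC1 : ∀ (j : ℕ), j < d → ∀ c : K, Sa d ω j (algebraMap K L c) =
      if 0 = j then algebraMap K L (d : K) * algebraMap K L c else 0 := by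
    intro j hj c
    exact Sa_eig hd hω (by omega) hj _ (by rw [aux_eck, pow_zero, map_one, one_mul])
  have hC2 : ∀ (i : ℕ), i < d → ∀ (j : ℕ), j < d → ∀ (c : K) (x : L),
      Sa d ω j (algebraMap K L c * Sa d ω i x) =
      if i = j then algebraMap K L (d : K) * (algebraMap K L c * Sa d ω i x) else 0 := by
    intro i hi j hj c x
    apply Sa_eig hd hω hi hj
    rw [mul_pow, aux_eck, Sa_frob hd hω hL, ← mul_assoc,
      mul_comm (algebraMap K L c), mul_assoc]
  have hIcc : ∀ j, j ∈ Finset.Icc 1 (d - 1) ↔ 1 ≤ j ∧ j < d := by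
    intro j; rw [Finset.mem_Icc]; omega
  -- components of f
  have D0 : ∀ x, Sa d ω 0 (f x) = algebraMap K L ((d : K) * Polynomial.eval (σ x) g) := by
    intro x
    rw [hfd x, Sa_add, hSsum, hC1 0 (by omega), if_pos rfl, ← map_mul,
      Finset.sum_eq_zero, add_zero]
    intro i hi
    rw [hC2 i (((hIcc i).mp hi).2) 0 (by omega), if_neg (by have := ((hIcc i).mp hi).1; omega)]
  have Dj : ∀ j, 1 ≤ j → j < d → ∀ x, Sa d ω j (f x) =
      algebraMap K L ((d : K) * (u j * (ω ^ j)⁻¹)) * Sa d ω j x := by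
    intro j hj1 hj2 x
    rw [hfd x, Sa_add, hSsum, hC1 j hj2, if_neg (by omega), zero_add,
      Finset.sum_eq_single_of_mem j ((hIcc j).mpr ⟨hj1, hj2⟩)]
    · rw [hC2 j hj2 j hj2, if_pos rfl, ← mul_assoc, ← map_mul]
    · intro i hi hij
      rw [hC2 i (((hIcc i).mp hi).2) j hj2, if_neg hij]
  -- reconstruction from components
  have E : ∀ x y : L, Sa d ω 0 x = Sa d ω 0 y →
      (∀ j, 1 ≤ j → j < d → Sa d ω j x = Sa d ω j y) → x = y := by
    intro x y h0 hj
    have hx := Sa_sum hd hω x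
    have hy := Sa_sum hd hω y
    have : algebraMap K L (d : K) * x = algebraMap K L (d : K) * y := by
      rw [← hx, ← hy]
      apply Finset.sum_congr rfl
      intro j hjr
      rw [Finset.mem_range] at hjr
      rcases Nat.eq_zero_or_pos j with h | h
      · subst h; exact h0
      · exact hj j h hjr
    exact mul_left_cancel₀ hedK this
  constructor
  · -- bijective → conditions
    rintro ⟨hfb, hfxb⟩
    -- eigenvectors
    have heig : ∀ j, 1 ≤ j → j < d → ∃ y : L, y ≠ 0 ∧
        y ^ Fintype.card K = algebraMap K L (ω ^ j) * y ∧
        (∀ i, i < d → Sa d ω i y = if j = i then algebraMap K L (d : K) * y else 0) := by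
      intro j hj1 hj2
      obtain ⟨x0, hx0⟩ := aux_nonzero d (by omega) hL
        (fun t => algebraMap K L ((ω ^ (j * t))⁻¹)) (by simp)
      refine ⟨Sa d ω j x0, hx0, Sa_frob hd hω hL j x0, ?_⟩
      intro i hi
      exact Sa_eig hd hω hj2 hi _ (Sa_frob hd hω hL j x0)
    have hσ0 : σ 0 = 0 := by
      apply einj
      rw [hσ, Sa_zero, map_zero]
    have hf0 : f 0 = algebraMap K L (Polynomial.eval 0 g) := by
      rw [hfd, hσ0, Finset.sum_eq_zero (fun i _ => by rw [Sa_zero, mul_zero]), add_zero]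
    have hfy : ∀ j, 1 ≤ j → j < d → ∀ y : L,
        y ^ Fintype.card K = algebraMap K L (ω ^ j) * y →
        (∀ i, i < d → Sa d ω i y = if j = i then algebraMap K L (d : K) * y else 0) →
        f y = algebraMap K L (Polynomial.eval 0 g) +
          algebraMap K L ((u j * (ω ^ j)⁻¹) * (d : K)) * y := by
      intro j hj1 hj2 y hyq hyS
      have hσy : σ y = 0 := by
        apply einj
        rw [hσ, hyS 0 (by omega), if_neg (by omega), map_zero]
      rw [hfd, hσy, Finset.sum_eq_single_of_mem j ((hIcc j).mpr ⟨hj1, hj2⟩)]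
      · rw [hyS j hj2, if_pos rfl, ← mul_assoc, ← map_mul]
      · intro i hi hij
        rw [hyS i (((hIcc i).mp hi).2), if_neg (Ne.symm hij), mul_zero]
    refine ⟨?_, ?_, ?_⟩
    · -- product nonzero
      rw [Finset.prod_ne_zero_iff]
      intro j hj
      obtain ⟨hj1, hj2⟩ := (hIcc j).mp hj
      obtain ⟨y, hy0, hyq, hyS⟩ := heig j hj1 hj2
      apply mul_ne_zero
      · intro hu
        apply hy0
        apply hfb.injective
        rw [hfy j hj1 hj2 y hyq hyS, hf0, hu]
        simp
      · intro hv
        apply hy0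
        apply hfxb.injective (a₁ := y) (a₂ := 0)
        simp only
        rw [hfy j hj1 hj2 y hyq hyS, hf0, add_zero]
        have : algebraMap K L (u j * (ω ^ j)⁻¹ * (d : K)) * y + y
            = algebraMap K L (1 + (d : K) * u j * (ω ^ j)⁻¹) * y := by
          rw [map_add, map_one, add_mul, one_mul, add_comm]
          congr 2
          ring
        rw [add_assoc, this, hv, map_zero, zero_mul, add_zero]
    · -- g bijective
      rw [← Finite.injective_iff_bijective]
      intro a b hab
      simp only at hab
      have hx : ∀ c : K, σ (algebraMap K L ((d : K)⁻¹ * c)) = c := by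
        intro c
        apply einj
        rw [hσ, hC1 0 (by omega), if_pos rfl, ← map_mul, ← mul_assoc,
          mul_inv_cancel₀ hdK, one_mul]
      have hSx : ∀ c : K, ∀ i, 1 ≤ i → i < d →
          Sa d ω i (algebraMap K L ((d : K)⁻¹ * c)) = 0 := by
        intro c i hi1 hi2
        rw [hC1 i hi2, if_neg (by omega)]
      have hfx : ∀ c : K, f (algebraMap K L ((d : K)⁻¹ * c))
          = algebraMap K L (Polynomial.eval c g) := by
        intro c
        rw [hfd, hx, Finset.sum_eq_zero, add_zero]
        intro i hi
        obtain ⟨hi1, hi2⟩ := (hIcc i).mp hi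
        rw [hSx c i hi1 hi2, mul_zero]
      have : algebraMap K L ((d : K)⁻¹ * a) = algebraMap K L ((d : K)⁻¹ * b) := by
        apply hfb.injective
        rw [hfx, hfx, hab]
      have := einj this
      exact mul_left_cancel₀ (inv_ne_zero hdK) this
    · -- d·g + x bijective
      rw [← Finite.injective_iff_bijective]
      intro a b hab
      simp only at hab
      have hx : ∀ c : K, σ (algebraMap K L ((d : K)⁻¹ * c)) = c := by
        intro c
        apply einj
        rw [hσ, hC1 0 (by omega), if_pos rfl, ← map_mul, ← mul_assoc,
          mul_inv_cancel₀ hdK, one_mul]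
      have hfx : ∀ c : K, f (algebraMap K L ((d : K)⁻¹ * c)) + algebraMap K L ((d : K)⁻¹ * c)
          = algebraMap K L ((d : K)⁻¹ * ((d : K) * Polynomial.eval c g + c)) := by
        intro c
        rw [hfd, hx, Finset.sum_eq_zero, add_zero, ← map_add]
        · congr 1
          field_simp
        · intro i hi
          obtain ⟨hi1, hi2⟩ := (hIcc i).mp hi
          rw [hC1 i hi2, if_neg (by omega), mul_zero]
      have : algebraMap K L ((d : K)⁻¹ * a) = algebraMap K L ((d : K)⁻¹ * b) := by
        apply hfxb.injective (a₁ := algebraMap K L ((d : K)⁻¹ * a))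
          (a₂ := algebraMap K L ((d : K)⁻¹ * b))
        simp only
        rw [hfx, hfx, hab]
      have := einj this
      exact mul_left_cancel₀ (inv_ne_zero hdK) this
  · -- conditions → bijective
    rintro ⟨hprod, hg, hgd⟩
    have hcond : ∀ j, j ∈ Finset.Icc 1 (d - 1) →
        u j ≠ 0 ∧ 1 + (d : K) * u j * (ω ^ j)⁻¹ ≠ 0 := by
      intro j hj
      have := Finset.prod_ne_zero_iff.mp hprod j hj
      exact mul_ne_zero_iff.mp this
    constructor
    · rw [← Finite.injective_iff_bijective]
      intro x y hxy
      have h0 : Sa d ω 0 x = Sa d ω 0 y := by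
        have h := congrArg (Sa d ω 0) hxy
        rw [D0, D0] at h
        have h2 := einj h
        have h3 := mul_left_cancel₀ hdK h2
        have h4 := hg.injective h3
        rw [← hσ, ← hσ, h4]
      have hj : ∀ j, 1 ≤ j → j < d → Sa d ω j x = Sa d ω j y := by
        intro j hj1 hj2
        have h := congrArg (Sa d ω j) hxy
        rw [Dj j hj1 hj2, Dj j hj1 hj2] at h
        have hcj := hcond j ((hIcc j).mpr ⟨hj1, hj2⟩)
        have hco : (d : K) * (u j * (ω ^ j)⁻¹) ≠ 0 :=
          mul_ne_zero hdK (mul_ne_zero hcj.1 (inv_ne_zero (pow_ne_zero j hω0)))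
        exact mul_left_cancel₀ (hene hco) h
      exact E x y h0 hj
    · rw [← Finite.injective_iff_bijective]
      intro x y hxy
      simp only at hxy
      have hD0' : ∀ z : L, Sa d ω 0 (f z + z)
          = algebraMap K L ((d : K) * Polynomial.eval (σ z) g + σ z) := by
        intro z
        rw [Sa_add, D0, map_add, hσ]
      have hDj' : ∀ j, 1 ≤ j → j < d → ∀ z : L, Sa d ω j (f z + z)
          = algebraMap K L ((d : K) * (u j * (ω ^ j)⁻¹) + 1) * Sa d ω j z := by
        intro j hj1 hj2 z
        rw [Sa_add, Dj j hj1 hj2, map_add, map_one, add_mul, one_mul]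
      have h0 : Sa d ω 0 x = Sa d ω 0 y := by
        have h := congrArg (Sa d ω 0) hxy
        rw [hD0', hD0'] at h
        have h2 := einj h
        have h4 := hgd.injective h2
        rw [← hσ, ← hσ, h4]
      have hj : ∀ j, 1 ≤ j → j < d → Sa d ω j x = Sa d ω j y := by
        intro j hj1 hj2
        have h := congrArg (Sa d ω j) hxy
        rw [hDj' j hj1 hj2, hDj' j hj1 hj2] at h
        have hcj := hcond j ((hIcc j).mpr ⟨hj1, hj2⟩)
        have hco : (d : K) * (u j * (ω ^ j)⁻¹) + 1 ≠ 0 := by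
          intro hz
          apply hcj.2
          rw [← hz]
          ring
        exact mul_left_cancel₀ (hene hco) h
      exact E x y h0 hj
end

section
/- Let n > 1, q a prime power, Tr(x) = x + x^q + ⋯ + x^{q^{n−1}} the trace from F_{q^n} to F_q, and g ∈ F_q[x]. Then f(x) = x^q − x + g(Tr(x)) is a permutation of F_{q^n} if and only if gcd(n, q) = 1 and g is a permutation of F_q. -/
/-!
The trace kills `x ^ q - x` and maps `c ∈ F_q` to `n c`, so `Tr (f x) = n g (Tr x)`. Since `Tr` is
onto `F_q`, bijectivity of `f` forces `n ≠ 0` in `F_q` and `g` to be onto. Conversely, if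
`f x = f y` then `g (Tr x) = g (Tr y)`, hence `Tr x = Tr y` and `x ^ q - x = y ^ q - y`; so `x - y`
is fixed by the Frobenius, lies in `F_q`, and has trace `n (x - y) = 0`.
-/

open Polynomial Function

namespace FiniteField

variable {K L : Type*} [Field K] [Fintype K] [Field L] [Finite L] [Algebra K L]

theorem natCast_ne_zero_iff_coprime_card (n : ℕ) :
    (n : K) ≠ 0 ↔ n.Coprime (Fintype.card K) := by
  obtain ⟨m, hp, hcard⟩ := FiniteField.card K (ringChar K)
  rw [hcard, Nat.coprime_pow_right_iff m.pos, Nat.coprime_comm, hp.coprime_iff_not_dvd, ne_eq,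
    CharP.cast_eq_zero_iff K (ringChar K)]

variable (K) in
theorem _root_.Algebra.trace_pow_card (x : L) :
    Algebra.trace K L (x ^ Fintype.card K) = Algebra.trace K L x :=
  Algebra.trace_eq_of_algEquiv (frobeniusAlgEquivOfAlgebraic K L) x

theorem mem_range_algebraMap_of_pow_card_eq_self {x : L} (hx : x ^ Fintype.card K = x) :
    x ∈ Set.range (algebraMap K L) := by
  rw [IsGalois.mem_range_algebraMap_iff_fixed]
  intro σ
  obtain ⟨i, rfl⟩ := (bijective_frobeniusAlgEquivOfAlgebraic_pow K L).surjective σ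
  rw [AlgEquiv.coe_pow, coe_frobeniusAlgEquivOfAlgebraic]
  exact iterate_fixed hx _

theorem trace_pow_card_sub_add_algebraMap (x : L) (c : K) :
    Algebra.trace K L (x ^ Fintype.card K - x + algebraMap K L c) = Module.finrank K L * c := by
  rw [map_add, map_sub, Algebra.trace_pow_card, sub_self, zero_add, Algebra.trace_algebraMap,
    nsmul_eq_mul]

theorem bijective_pow_card_sub_add_trace_iff (h : K → K) :
    Bijective (fun x : L ↦ x ^ Fintype.card K - x + algebraMap K L (h (Algebra.trace K L x))) ↔
      (Module.finrank K L : K) ≠ 0 ∧ Bijective h := by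
  set F := fun x : L ↦ x ^ Fintype.card K - x + algebraMap K L (h (Algebra.trace K L x))
  set d : K := (Module.finrank K L : K)
  have trace_F (x : L) : Algebra.trace K L (F x) = d * h (Algebra.trace K L x) :=
    trace_pow_card_sub_add_algebraMap x _
  constructor
  · intro hF
    have hsurj : Surjective (Algebra.trace K L ∘ F) :=
      (Algebra.trace_surjective K L).comp hF.surjective
    have hd : d ≠ 0 := by
      intro hd
      obtain ⟨x, hx⟩ := hsurj 1
      simp [trace_F, hd] at hx
    refine ⟨hd, Finite.surjective_iff_bijective.mp fun c ↦ ?_⟩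
    obtain ⟨x, hx⟩ := hsurj (d * c)
    exact ⟨Algebra.trace K L x, mul_left_cancel₀ hd ((trace_F x).symm.trans hx)⟩
  · rintro ⟨hd, hh⟩
    refine Finite.injective_iff_bijective.mp fun x y hxy ↦ ?_
    have htr : Algebra.trace K L x = Algebra.trace K L y :=
      hh.injective <| mul_left_cancel₀ hd <| by rw [← trace_F, ← trace_F, hxy]
    have hfix : (x - y) ^ Fintype.card K = x - y := by
      have hxy' : x ^ Fintype.card K - x = y ^ Fintype.card K - y := by
        simpa only [F, htr, add_left_inj] using hxy
      have hsub : (x - y) ^ Fintype.card K = x ^ Fintype.card K - y ^ Fintype.card K :=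
        map_sub (frobeniusAlgHom K L) x y
      linear_combination hsub + hxy'
    obtain ⟨c, hc⟩ := mem_range_algebraMap_of_pow_card_eq_self hfix
    have hdc : d * c = 0 := by
      rw [← nsmul_eq_mul, ← Algebra.trace_algebraMap, hc, map_sub, htr, sub_self]
    rw [← sub_eq_zero, ← hc, (mul_eq_zero.mp hdc).resolve_left hd, map_zero]

end FiniteField

open FiniteField in
theorem trace_pp_criterion_general (K L : Type) [Field K] [Fintype K] [Field L] [Fintype L]
    [Algebra K L]
    (n : ℕ) (hL : Fintype.card L = Fintype.card K ^ n)
    (T : L → L)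
    (hT : ∀ x : L, T x = ∑ i ∈ Finset.range n, x ^ Fintype.card K ^ i)
    (g : Polynomial K)
    (f : L → L)
    (hf : ∀ x : L, f x = x ^ Fintype.card K - x + Polynomial.aeval (T x) g) :
    Function.Bijective f ↔
      (Nat.gcd n (Fintype.card K) = 1 ∧
        Function.Bijective (fun c : K => Polynomial.eval c g)) := by
  have hrank : Module.finrank K L = n :=
    Nat.pow_right_injective Fintype.one_lt_card (Module.card_eq_pow_finrank.symm.trans hL)
  have hf' :
      f = fun x ↦ x ^ Fintype.card K - x + algebraMap K L (g.eval (Algebra.trace K L x)) := by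
    funext x
    rw [hf, hT, ← Nat.card_eq_fintype_card, ← hrank, ← algebraMap_trace_eq_sum_pow,
      aeval_algebraMap_apply_eq_algebraMap_eval]
  rw [hf', bijective_pow_card_sub_add_trace_iff (g.eval ·), hrank,
    natCast_ne_zero_iff_coprime_card]

/-- Theorem 4.2 (criterion): `f(x) = x^q − x + g(Tr(x))` is a permutation of `F_{q^n}`
iff `gcd(n, q) = 1` and `g` permutes `F_q`. -/
theorem trace_pp_criterion (K L : Type) [Field K] [Fintype K] [Field L] [Fintype L]
    [Algebra K L]
    (n : ℕ) (hn : 1 < n) (hL : Fintype.card L = Fintype.card K ^ n)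
    (T : L → L)
    (hT : ∀ x : L, T x = ∑ i ∈ Finset.range n, x ^ Fintype.card K ^ i)
    (g : Polynomial K)
    (f : L → L)
    (hf : ∀ x : L, f x = x ^ Fintype.card K - x + Polynomial.aeval (T x) g) :
    Function.Bijective f ↔
      (Nat.gcd n (Fintype.card K) = 1 ∧
        Function.Bijective (fun c : K => Polynomial.eval c g)) :=
  trace_pp_criterion_general K L n hL T hT g f hf
end
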